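/- arXiv:1309.7264 — 8 statements merged into one kernel-verified Lean document; each statement's English description precedes it below -/
import Mathlib

section
/- Let G=(V,E) be a finite connected undirected graph with oriented edge set Ē, grad: ℝ^V → ℝ^Ē defined by (grad x)(v,w) = x(w) − x(v), and div: ℝ^Ē → ℝ^V its negative adjoint, i.e. ⟨grad f, ξ⟩ = −⟨f, div ξ⟩. Let ℝ₀^V = {x : Σ_v x(v) = 0}, ‖x‖_TV = Σ_{e∈Ē} |(grad x)(e)|, and for u ∈ ℝ₀^V let ‖u‖_* = max{⟨x,u⟩ : ‖x‖_TV ≤ 1}. Then ‖u‖_* = inf{ ‖ξ‖_∞ : ξ ∈ ℝ^Ē, u = div ξ }, where ‖ξ‖_∞ = max_{e∈Ē} |ξ(e)|. -/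
open Finset

noncomputable section

/-- Discrete total variation. -/
def tvNorm {V : Type*} [Fintype V] (G : SimpleGraph V) [DecidableRel G.Adj]
    (x : V → ℝ) : ℝ :=
  (1 / 2) * ∑ v, ∑ w, if G.Adj v w then |x w - x v| else 0

/-- Dual norm of the TV norm on the zero-mean subspace:
`‖u‖_* = sup {⟨x,u⟩ : x zero-mean, ‖x‖_TV ≤ 1}`. -/
def dualNorm {V : Type*} [Fintype V] (G : SimpleGraph V) [DecidableRel G.Adj]
    (u : V → ℝ) : ℝ :=
  sSup {r | ∃ x : V → ℝ, (∑ v, x v = 0) ∧ tvNorm G x ≤ 1 ∧ r = ∑ v, x v * u v}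

/-!
Summation by parts gives `⟨x, div ξ⟩ = -½ ∑ (grad x) ξ ≤ ‖ξ‖_∞ ‖x‖_TV` for antisymmetric `ξ`,
so `‖div ξ‖_* ≤ ‖ξ‖_∞`. Conversely, since `∑ u = 0` the bound `⟨x, u⟩ ≤ ‖u‖_* ‖x‖_TV` holds for
every `x`, not only the zero-mean ones; thus `grad x ↦ ⟨x, u⟩` is a well-defined functional on the
range of `grad`, dominated by `‖u‖_*/2` times the ℓ¹ norm over oriented edges. Hahn–Banach extends
it to all edge fields with the same bound, so it is `θ ↦ ∑ θ η` for some `η` with `|η| ≤ ‖u‖_*/2`,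
and the antisymmetric field `ηᵀ - η` has divergence `u` and sup norm at most `‖u‖_*`.
Every zero-mean `u` is a divergence, because on a connected graph `δ_b - δ_a` is one by
telescoping along a path from `a` to `b`.
-/

theorem Module.Dual.exists_comp_eq_of_le_seminorm_comp {E F : Type*} [AddCommGroup E]
    [Module ℝ E] [AddCommGroup F] [Module ℝ F] (T : F →ₗ[ℝ] E) (f : Module.Dual ℝ F)
    {p : Seminorm ℝ E} (hf : ∀ x, f x ≤ p (T x)) :
    ∃ g : Module.Dual ℝ E, g ∘ₗ T = f ∧ ∀ y, |g y| ≤ p y := by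
  have hker : LinearMap.ker T ≤ LinearMap.ker f := fun x hx => by
    rw [LinearMap.mem_ker] at hx ⊢
    have h₁ := hf x
    have h₂ := hf (-x)
    rw [hx, map_zero] at h₁
    rw [map_neg, map_neg, hx, neg_zero, map_zero] at h₂
    linarith
  let f' : Module.Dual ℝ (LinearMap.range T) :=
    (LinearMap.ker T).liftQ f hker ∘ₗ T.quotKerEquivRange.symm.toLinearMap
  have hf' (x : F) : f' ⟨T x, LinearMap.mem_range_self T x⟩ = f x := by
    simp [f', LinearMap.quotKerEquivRange_symm_apply_image]
  obtain ⟨g, hg, hgp⟩ := f'.exists_extension_of_le_seminorm_real _ (p := p) <| by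
    rintro ⟨_, x, rfl⟩
    exact (hf' x).trans_le (hf x)
  exact ⟨g, LinearMap.ext fun x => (hg _).trans (hf' x), hgp⟩

theorem Module.Dual.apply_eq_sum_sum_single {R ι κ : Type*} [CommSemiring R] [Fintype ι]
    [Fintype κ] [DecidableEq ι] [DecidableEq κ] (g : Module.Dual R (ι → κ → R))
    (η : ι → κ → R) : g η = ∑ i, ∑ j, η i j * g (Pi.single i (Pi.single j 1)) := by
  have hη : η = ∑ i, ∑ j, η i j • Pi.single i (Pi.single j (1 : R)) := by
    ext i j
    simp [Finset.sum_apply, Pi.single_apply, apply_ite (fun f : κ → R => f j)]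
  conv_lhs => rw [hη]
  simp [map_sum, map_smul]

theorem SimpleGraph.Connected.mem_of_sum_eq_zero {R V : Type*} [Ring R] [Fintype V] [DecidableEq V]
    {G : SimpleGraph V} (hG : G.Connected) {S : Submodule R (V → R)}
    (hS : ∀ a b, G.Adj a b → Pi.single b 1 - Pi.single a 1 ∈ S) {u : V → R}
    (hu : ∑ v, u v = 0) : u ∈ S := by
  obtain ⟨a⟩ := hG.nonempty
  have hreach (b : V) : Pi.single b 1 - Pi.single a 1 ∈ S := by
    obtain ⟨p⟩ := hG.preconnected a b
    induction p with
    | nil => simp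
    | @cons c d e h p ih =>
      simpa using S.add_mem ih (hS c d h)
  have hu' : u = ∑ b, u b • (Pi.single b 1 - Pi.single a 1 : V → R) := by
    ext v
    simp [Finset.sum_apply, Pi.single_apply, smul_sub, hu]
  rw [hu']
  exact S.sum_mem fun b _ => S.smul_mem _ (hreach b)

theorem sum_sub_mean_eq_zero {ι K : Type*} [Fintype ι] [Field K] [CharZero K] (x : ι → K) :
    ∑ i, (x i - (∑ j, x j) / Fintype.card ι) = 0 := by
  rcases isEmpty_or_nonempty ι with hι | hι
  · simp
  · rw [sum_sub_distrib, sum_const, card_univ, nsmul_eq_mul, mul_div_cancel₀ _ (by simp)]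
    exact sub_self _

def antisymmetricFields (V : Type*) : Submodule ℝ (V → V → ℝ) where
  carrier := {ξ | ∀ v w, ξ v w = -ξ w v}
  add_mem' {ξ η} hξ hη v w := by simp only [Pi.add_apply, hξ v w, hη v w]; ring
  zero_mem' _ _ := by simp
  smul_mem' c ξ hξ v w := by simp [hξ v w]

namespace SimpleGraph

section EdgeSup

variable {V : Type*} {G : SimpleGraph V}

variable (G) in
def edgeSup (ξ : V → V → ℝ) : ℝ := sSup {a | ∃ v w, G.Adj v w ∧ a = |ξ v w|}

theorem abs_le_edgeSup [Finite V] (ξ : V → V → ℝ) {v w : V} (h : G.Adj v w) :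
    |ξ v w| ≤ G.edgeSup ξ := by
  refine le_csSup ?_ ⟨v, w, h, rfl⟩
  refine ((Set.finite_range fun p : V × V => |ξ p.1 p.2|).subset ?_).bddAbove
  rintro _ ⟨v, w, -, rfl⟩
  exact ⟨(v, w), rfl⟩

theorem edgeSup_nonneg (ξ : V → V → ℝ) : 0 ≤ G.edgeSup ξ :=
  Real.sSup_nonneg fun _ ⟨_, _, _, ha⟩ => ha ▸ abs_nonneg _

theorem edgeSup_le {ξ : V → V → ℝ} {c : ℝ} (hc : 0 ≤ c) (h : ∀ v w, G.Adj v w → |ξ v w| ≤ c) :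
    G.edgeSup ξ ≤ c :=
  Real.sSup_le (fun _ ⟨v, w, hvw, ha⟩ => ha ▸ h v w hvw) hc

end EdgeSup

variable {V : Type*} (G : SimpleGraph V) [DecidableRel G.Adj]

def grad : (V → ℝ) →ₗ[ℝ] (V → V → ℝ) where
  toFun x v w := if G.Adj v w then x w - x v else 0
  map_add' x y := by
    ext v w
    simp only [Pi.add_apply]
    split_ifs <;> ring
  map_smul' c x := by
    ext v w
    simp only [Pi.smul_apply, smul_eq_mul, RingHom.id_apply]
    split_ifs <;> ring

theorem grad_apply (x : V → ℝ) (v w : V) :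
    G.grad x v w = if G.Adj v w then x w - x v else 0 := rfl

theorem grad_const (a : ℝ) : G.grad (fun _ => a) = 0 := by
  ext v w
  simp [grad_apply]

variable [Fintype V]

def divergence : (V → V → ℝ) →ₗ[ℝ] (V → ℝ) where
  toFun ξ v := ∑ w, if G.Adj v w then ξ v w else 0
  map_add' ξ η := by ext v; simp [← sum_add_distrib, ite_add_ite]
  map_smul' c ξ := by ext v; simp [mul_sum]

def edgeL1 : Seminorm ℝ (V → V → ℝ) :=
  Seminorm.of (fun η => ∑ v, ∑ w, if G.Adj v w then |η v w| else 0)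
    (fun η θ => by
      simp only [← sum_add_distrib]
      gcongr with v _ w _
      split_ifs
      · exact abs_add_le _ _
      · simp)
    (fun c η => by simp [mul_sum, abs_mul])

theorem divergence_apply (ξ : V → V → ℝ) (v : V) :
    G.divergence ξ v = ∑ w, if G.Adj v w then ξ v w else 0 := rfl

theorem edgeL1_apply (η : V → V → ℝ) :
    G.edgeL1 η = ∑ v, ∑ w, if G.Adj v w then |η v w| else 0 := rfl

theorem tvNorm_eq_edgeL1_grad (x : V → ℝ) : tvNorm G x = G.edgeL1 (G.grad x) / 2 := by
  rw [tvNorm, edgeL1_apply, one_div, inv_mul_eq_div]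
  congr 1
  refine sum_congr rfl fun v _ => sum_congr rfl fun w _ => ?_
  by_cases h : G.Adj v w <;> simp [grad_apply, h]

theorem edgeL1_single [DecidableEq V] {a b : V} (h : G.Adj a b) :
    G.edgeL1 (Pi.single a (Pi.single b 1)) = 1 := by
  rw [edgeL1_apply, Fintype.sum_eq_single a, Fintype.sum_eq_single b]
  · simp [h]
  · intro w hw; simp [hw]
  · intro v hv; simp [hv]

theorem sum_grad_mul (x : V → ℝ) (ξ : V → V → ℝ) :
    ∑ v, ∑ w, G.grad x v w * ξ v w = ∑ v, x v * G.divergence (Function.swap ξ - ξ) v := by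
  have hswap : ∑ v, ∑ w, (if G.Adj v w then x w * ξ v w else 0)
      = ∑ v, ∑ w, if G.Adj v w then x v * ξ w v else 0 := by
    rw [sum_comm]
    simp only [G.adj_comm]
  calc ∑ v, ∑ w, G.grad x v w * ξ v w
      = ∑ v, ∑ w, ((if G.Adj v w then x w * ξ v w else 0)
          - if G.Adj v w then x v * ξ v w else 0) := by
        simp only [grad_apply]
        congr! 2 with v _ w _
        split_ifs <;> ring
    _ = ∑ v, ∑ w, ((if G.Adj v w then x v * ξ w v else 0)
          - if G.Adj v w then x v * ξ v w else 0) := by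
        simp only [sum_sub_distrib, hswap]
    _ = ∑ v, x v * G.divergence (Function.swap ξ - ξ) v := by
        simp only [divergence_apply, mul_sum]
        congr! 2 with v _ w _
        split_ifs <;> simp [mul_sub]

theorem tvNorm_nonneg (x : V → ℝ) : 0 ≤ tvNorm G x := by
  rw [tvNorm_eq_edgeL1_grad]
  exact div_nonneg (apply_nonneg _ _) zero_le_two

theorem tvNorm_smul (c : ℝ) (x : V → ℝ) : tvNorm G (c • x) = |c| * tvNorm G x := by
  simp [tvNorm_eq_edgeL1_grad, map_smul_eq_mul, mul_div_assoc]

theorem tvNorm_sub_const (x : V → ℝ) (a : ℝ) : tvNorm G (x - fun _ => a) = tvNorm G x := by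
  rw [tvNorm_eq_edgeL1_grad, tvNorm_eq_edgeL1_grad, map_sub, grad_const, sub_zero]

theorem sum_mul_le_edgeL1_mul {η ξ : V → V → ℝ} {c : ℝ} (hη : ∀ v w, ¬G.Adj v w → η v w = 0)
    (hξ : ∀ v w, G.Adj v w → |ξ v w| ≤ c) :
    ∑ v, ∑ w, η v w * ξ v w ≤ G.edgeL1 η * c := by
  rw [edgeL1_apply, sum_mul]
  refine sum_le_sum fun v _ => ?_
  rw [sum_mul]
  refine sum_le_sum fun w _ => ?_
  by_cases h : G.Adj v w
  · rw [if_pos h]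
    calc η v w * ξ v w ≤ |η v w| * |ξ v w| := (le_abs_self _).trans (abs_mul _ _).le
      _ ≤ |η v w| * c := by gcongr; exact hξ v w h
  · simp [h, hη v w h]

theorem sum_mul_divergence_of_antisymm {ξ : V → V → ℝ} (hξ : ∀ v w, ξ v w = -ξ w v)
    (x : V → ℝ) :
    ∑ v, x v * G.divergence ξ v = -(∑ v, ∑ w, G.grad x v w * ξ v w) / 2 := by
  have hξ' : Function.swap (-(1 / 2 : ℝ) • ξ) - -(1 / 2 : ℝ) • ξ = ξ := by
    ext v w
    simp only [Pi.sub_apply, Pi.smul_apply, Function.swap, smul_eq_mul, hξ w v]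
    ring
  conv_lhs => rw [← hξ', ← sum_grad_mul]
  simp only [Pi.smul_apply, smul_eq_mul, neg_div, sum_div, ← sum_neg_distrib]
  ring_nf

theorem sum_divergence_eq_zero {ξ : V → V → ℝ} (hξ : ∀ v w, ξ v w = -ξ w v) :
    ∑ v, G.divergence ξ v = 0 := by
  simpa [grad_const] using G.sum_mul_divergence_of_antisymm hξ fun _ => 1

theorem sum_mul_divergence_le {ξ : V → V → ℝ} (hξ : ∀ v w, ξ v w = -ξ w v) (x : V → ℝ) :
    ∑ v, x v * G.divergence ξ v ≤ G.edgeSup ξ * tvNorm G x := by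
  calc ∑ v, x v * G.divergence ξ v
      = (∑ v, ∑ w, G.grad x v w * -ξ v w) / 2 := by
        simp [G.sum_mul_divergence_of_antisymm hξ, neg_div]
    _ ≤ G.edgeL1 (G.grad x) * G.edgeSup ξ / 2 := by
        gcongr
        refine G.sum_mul_le_edgeL1_mul (fun v w h => by simp [grad_apply, h]) fun v w h => ?_
        simpa using abs_le_edgeSup ξ h
    _ = G.edgeSup ξ * tvNorm G x := by rw [tvNorm_eq_edgeL1_grad]; ring

theorem divergence_single [DecidableEq V] {a b : V} (h : G.Adj a b) :
    G.divergence (Pi.single a (Pi.single b 1)) = Pi.single a 1 := by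
  ext v
  by_cases hv : v = a
  · subst hv
    rw [divergence_apply, Fintype.sum_eq_single b fun w hw => by simp [hw]]
    simp [h]
  · simp [divergence_apply, hv]

theorem exists_antisymm_divergence_eq (hG : G.Connected) {u : V → ℝ} (hu : ∑ v, u v = 0) :
    ∃ ξ, (∀ v w, ξ v w = -ξ w v) ∧ G.divergence ξ = u := by
  classical
  refine Submodule.mem_map.mp <| hG.mem_of_sum_eq_zero
    (S := (antisymmetricFields V).map G.divergence) (fun a b h => ?_) hu
  refine ⟨Pi.single b (Pi.single a 1) - Pi.single a (Pi.single b 1), fun v w => ?_, ?_⟩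
  · simp only [Pi.sub_apply, Pi.single_apply]
    split_ifs <;> simp_all
  · rw [map_sub, G.divergence_single h.symm, G.divergence_single h]

theorem sum_mul_le_edgeSup {ξ : V → V → ℝ} (hξ : ∀ v w, ξ v w = -ξ w v) {x : V → ℝ}
    (hx : tvNorm G x ≤ 1) : ∑ v, x v * G.divergence ξ v ≤ G.edgeSup ξ :=
  (G.sum_mul_divergence_le hξ x).trans (mul_le_of_le_one_right (edgeSup_nonneg ξ) hx)

theorem dualNorm_le_edgeSup {ξ : V → V → ℝ} (hξ : ∀ v w, ξ v w = -ξ w v) :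
    dualNorm G (G.divergence ξ) ≤ G.edgeSup ξ :=
  csSup_le ⟨0, 0, by simp, by simp [tvNorm], by simp⟩ <| by
    rintro _ ⟨x, -, hx, rfl⟩
    exact G.sum_mul_le_edgeSup hξ hx

theorem le_dualNorm {ξ : V → V → ℝ} (hξ : ∀ v w, ξ v w = -ξ w v) {x : V → ℝ}
    (hx₀ : ∑ v, x v = 0) (hx : tvNorm G x ≤ 1) :
    ∑ v, x v * G.divergence ξ v ≤ dualNorm G (G.divergence ξ) := by
  refine le_csSup ⟨G.edgeSup ξ, ?_⟩ ⟨x, hx₀, hx, rfl⟩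
  rintro _ ⟨y, -, hy, rfl⟩
  exact G.sum_mul_le_edgeSup hξ hy

theorem dualNorm_nonneg {ξ : V → V → ℝ} (hξ : ∀ v w, ξ v w = -ξ w v) :
    0 ≤ dualNorm G (G.divergence ξ) := by
  simpa using G.le_dualNorm hξ (x := 0) (by simp) (by simp [tvNorm])

theorem sum_mul_le_dualNorm_mul_tvNorm {ξ : V → V → ℝ} (hξ : ∀ v w, ξ v w = -ξ w v)
    (x : V → ℝ) :
    ∑ v, x v * G.divergence ξ v ≤ dualNorm G (G.divergence ξ) * tvNorm G x := by
  obtain ht | ht := (tvNorm_nonneg G x).eq_or_lt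
  · calc ∑ v, x v * G.divergence ξ v ≤ G.edgeSup ξ * tvNorm G x := G.sum_mul_divergence_le hξ x
      _ = dualNorm G (G.divergence ξ) * tvNorm G x := by rw [← ht, mul_zero, mul_zero]
  · set m := (∑ v, x v) / Fintype.card V
    set y : V → ℝ := (tvNorm G x)⁻¹ • (x - fun _ => m)
    have hy₀ : ∑ v, y v = 0 := by
      simp only [y, Pi.smul_apply, Pi.sub_apply, smul_eq_mul, ← mul_sum, m,
        sum_sub_mean_eq_zero, mul_zero]
    have hy : tvNorm G y ≤ 1 := by
      rw [tvNorm_smul, tvNorm_sub_const, abs_inv, abs_of_pos ht, inv_mul_cancel₀ ht.ne']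
    have hyu : ∑ v, y v * G.divergence ξ v = (tvNorm G x)⁻¹ * ∑ v, x v * G.divergence ξ v := by
      simp [y, mul_sub, sub_mul, sum_sub_distrib, ← mul_sum, mul_assoc,
        G.sum_divergence_eq_zero hξ]
    have := G.le_dualNorm hξ hy₀ hy
    rwa [hyu, inv_mul_le_iff₀ ht, mul_comm] at this

theorem exists_antisymm_divergence_eq_abs_le_dualNorm {ξ : V → V → ℝ}
    (hξ : ∀ v w, ξ v w = -ξ w v) :
    ∃ ζ : V → V → ℝ, (∀ v w, ζ v w = -ζ w v) ∧ G.divergence ζ = G.divergence ξ ∧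
      ∀ v w, G.Adj v w → |ζ v w| ≤ dualNorm G (G.divergence ξ) := by
  classical
  set c := dualNorm G (G.divergence ξ)
  have hc : 0 ≤ c / 2 := by have := G.dualNorm_nonneg hξ; positivity
  obtain ⟨g, hgT, hgp⟩ := Module.Dual.exists_comp_eq_of_le_seminorm_comp G.grad
    ((dotProductBilin ℝ ℝ).flip (G.divergence ξ)) (p := (c / 2).toNNReal • G.edgeL1)
    fun x => by
      convert G.sum_mul_le_dualNorm_mul_tvNorm hξ x using 1
      · simp [dotProduct]
      · simp only [smul_apply, NNReal.smul_def, Real.coe_toNNReal _ hc, smul_eq_mul,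
          tvNorm_eq_edgeL1_grad]
        ring
  set η : V → V → ℝ := fun v w => g (Pi.single v (Pi.single w 1))
  have hη {v w : V} (h : G.Adj v w) : |η v w| ≤ c / 2 := by
    simpa [G.edgeL1_single h, NNReal.smul_def, Real.coe_toNNReal _ hc]
      using hgp (Pi.single v (Pi.single w 1))
  have hpair (x : V → ℝ) :
      ∑ v, x v * G.divergence (Function.swap η - η) v = ∑ v, x v * G.divergence ξ v := by
    rw [← sum_grad_mul, ← Module.Dual.apply_eq_sum_sum_single, ← LinearMap.comp_apply, hgT]
    rfl
  refine ⟨Function.swap η - η, fun v w => by simp [Function.swap], ?_, fun v w h => ?_⟩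
  · ext a
    simpa [Pi.single_apply] using hpair (Pi.single a 1)
  · calc |η w v - η v w| ≤ |η w v| + |η v w| := abs_sub _ _
      _ ≤ c / 2 + c / 2 := add_le_add (hη h.symm) (hη h)
      _ = c := add_halves c

end SimpleGraph

/-- The dual TV norm of a zero-mean `u` equals the infimum of `‖ξ‖_∞` over all
antisymmetric vector fields `ξ` on the (oriented) edges with `div ξ = u`, where
`(div ξ)(v) = ∑_{w ∼ v} ξ v w` and `‖ξ‖_∞` is the sup of `|ξ|` over edges. -/
theorem dualNorm_eq_inf_div {V : Type*} [Fintype V]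
    (G : SimpleGraph V) [DecidableRel G.Adj] (hG : G.Connected)
    (u : V → ℝ) (hu : ∑ v, u v = 0) :
    dualNorm G u =
      sInf {r | ∃ ξ : V → V → ℝ,
        (∀ v w, ξ v w = -ξ w v) ∧
        (∀ v, (∑ w, if G.Adj v w then ξ v w else 0) = u v) ∧
        r = sSup {a | ∃ v w, G.Adj v w ∧ a = |ξ v w|}} := by
  obtain ⟨ξ₀, hξ₀, rfl⟩ := G.exists_antisymm_divergence_eq hG hu
  obtain ⟨ξ, hξ, hdiv, hle⟩ := G.exists_antisymm_divergence_eq_abs_le_dualNorm hξ₀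
  symm
  refine IsLeast.csInf_eq ⟨⟨ξ, hξ, congrFun hdiv, ?_⟩, ?_⟩
  · refine le_antisymm ?_ (SimpleGraph.edgeSup_le (G.dualNorm_nonneg hξ₀) hle)
    exact hdiv ▸ G.dualNorm_le_edgeSup hξ
  · rintro _ ⟨ζ, hζ, hdivζ, rfl⟩
    exact (funext hdivζ : G.divergence ζ = G.divergence ξ₀) ▸ G.dualNorm_le_edgeSup hζ
end
end

section
/- Let G=(V,E) be a finite connected graph and u ∈ ℝ₀^V. Then ‖u‖_* = max of |⟨u, 1_S⟩| / per(S) over nonempty subsets S ⊆ V with |S| ≤ |V|/2 such that the induced subgraph G(S) is connected. -/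
/-!
Let `M` be the maximum, attained at `S₀`. The zero-mean function `±(1_S₀ - |S₀|/|V|) / per(S₀)`
has total variation at most `1` and pairs with `u` to `M`, so `‖u‖_* ≥ M`. Conversely, first
`|⟨u, 1_S⟩| ≤ M per(S)` for every `S`, by strong induction: a set with `2|S| > |V|` is traded
for its complement (`u` has zero mean and `per(Sᶜ) = per(S)`), and a set inducing a disconnected
subgraph splits into two pieces with no edge between them, on which both sides are additive.
Then a discrete coarea argument: if `S = {m < x}` for `m = min x` and `Δ` is the gap to the
next value of `x`, subtracting `Δ 1_S` from `x` lowers `tv(x)` by exactly `Δ per(S)` and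
`⟨x, u⟩` by `Δ ⟨u, 1_S⟩`, so `⟨x, u⟩ ≤ M tv(x)` by induction on the level set.
-/

open Finset

noncomputable section

/-- Perimeter of a subset of vertices. -/
def perim {V : Type*} [Fintype V] [DecidableEq V] (G : SimpleGraph V)
    [DecidableRel G.Adj] (A : Finset V) : ℝ :=
  tvNorm G (fun v => if v ∈ A then 1 else 0)

section

variable {V : Type*} [Fintype V] (G : SimpleGraph V) [DecidableRel G.Adj]

lemma tvNorm_nonneg (x : V → ℝ) : 0 ≤ tvNorm G x := by
  unfold tvNorm
  refine mul_nonneg (by norm_num) (sum_nonneg fun v _ => sum_nonneg fun w _ => ?_)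
  split_ifs <;> positivity

lemma tvNorm_const (c : ℝ) : tvNorm G (fun _ => c) = 0 := by
  simp [tvNorm]

lemma tvNorm_mul_add_const (a b : ℝ) (x : V → ℝ) :
    tvNorm G (fun v => a * x v + b) = |a| * tvNorm G x := by
  have hterm : ∀ v w, (if G.Adj v w then |(a * x w + b) - (a * x v + b)| else 0)
      = |a| * if G.Adj v w then |x w - x v| else 0 := by
    intro v w
    split_ifs
    · rw [← abs_mul, mul_sub, add_sub_add_right_eq_sub]
    · rw [mul_zero]
  simp only [tvNorm, hterm, ← mul_sum]
  ring

lemma tvNorm_eq_add_of_forall_adj {x y z : V → ℝ}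
    (h : ∀ v w, G.Adj v w → |x w - x v| = |y w - y v| + |z w - z v|) :
    tvNorm G x = tvNorm G y + tvNorm G z := by
  simp only [tvNorm, ← mul_add, ← sum_add_distrib]
  congr 1
  refine sum_congr rfl fun v _ => sum_congr rfl fun w _ => ?_
  split_ifs with hvw
  · exact h v w hvw
  · rw [add_zero]

variable [DecidableEq V]

lemma perim_nonneg (S : Finset V) : 0 ≤ perim G S := tvNorm_nonneg G _

lemma perim_compl (S : Finset V) : perim G Sᶜ = perim G S := by
  have hind : (fun v => if v ∈ Sᶜ then (1 : ℝ) else 0)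
      = fun v => -1 * (if v ∈ S then 1 else 0) + 1 := by
    funext v
    by_cases hv : v ∈ S <;> simp [hv]
  rw [perim, hind, tvNorm_mul_add_const, abs_neg, abs_one, one_mul, perim]

lemma perim_union_of_forall_not_adj {A B : Finset V} (hAB : Disjoint A B)
    (hadj : ∀ a ∈ A, ∀ b ∈ B, ¬G.Adj a b) :
    perim G (A ∪ B) = perim G A + perim G B := by
  refine tvNorm_eq_add_of_forall_adj G fun v w hvw => ?_
  have hAB' : ∀ a ∈ A, a ∉ B := fun _ ha => disjoint_left.mp hAB ha
  have hadj' : ∀ b ∈ B, ∀ a ∈ A, ¬G.Adj b a := fun b hb a ha h => hadj a ha b hb h.symm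
  by_cases hvA : v ∈ A <;> by_cases hvB : v ∈ B <;> by_cases hwA : w ∈ A <;>
    by_cases hwB : w ∈ B <;> simp_all

lemma perim_pos (hG : G.Connected) {S : Finset V} (hS : S.Nonempty) (hSc : Sᶜ.Nonempty) :
    0 < perim G S := by
  obtain ⟨a, ha⟩ := hS
  obtain ⟨b, hb⟩ := hSc
  obtain ⟨d, -, hd, hd'⟩ :=
    (hG.preconnected a b).some.exists_boundary_dart (S : Set V) ha (by simpa using hb)
  unfold perim tvNorm
  refine mul_pos (by norm_num) (sum_pos' (fun v _ => sum_nonneg fun w _ => ?_)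
    ⟨d.fst, mem_univ _, sum_pos' (fun w _ => ?_) ⟨d.snd, mem_univ _, ?_⟩⟩)
  · split_ifs <;> positivity
  · split_ifs <;> positivity
  · simp_all [d.adj]

end

namespace SimpleGraph

variable {V : Type*} [DecidableEq V] (G : SimpleGraph V)

lemma exists_ssubset_forall_not_adj_sdiff_of_not_connected {S : Finset V} (hS : S.Nonempty)
    (hconn : ¬(G.induce (S : Set V)).Connected) :
    ∃ A ⊂ S, A.Nonempty ∧ ∀ a ∈ A, ∀ b ∈ S \ A, ¬G.Adj a b := by
  classical
  have : Nonempty (S : Set V) := hS.coe_sort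
  obtain ⟨a, b, hab⟩ : ∃ a b : (S : Set V), ¬(G.induce (S : Set V)).Reachable a b := by
    simpa [connected_iff, Preconnected] using hconn
  let A := S.filter fun v => ∃ hv : v ∈ S, (G.induce (S : Set V)).Reachable a ⟨v, hv⟩
  have haA : a.1 ∈ A := mem_filter.mpr ⟨a.2, a.2, Reachable.refl _⟩
  have hbA : b.1 ∉ A := fun hb => hab (by obtain ⟨-, _, hr⟩ := mem_filter.mp hb; exact hr)
  have hAS : A ⊂ S :=
    Finset.ssubset_iff_subset_ne.mpr ⟨filter_subset _ _, fun h => hbA (by rw [h]; exact b.2)⟩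
  refine ⟨A, hAS, ⟨a, haA⟩, fun v hv w hw hvw => ?_⟩
  obtain ⟨hwS, hwA⟩ := mem_sdiff.mp hw
  obtain ⟨-, hvS, hav⟩ := mem_filter.mp hv
  exact hwA (mem_filter.mpr ⟨hwS, hwS,
    hav.trans (Adj.reachable (G := G.induce (S : Set V)) (u := ⟨v, hvS⟩) (v := ⟨w, hwS⟩) hvw)⟩)

end SimpleGraph

section

variable {V : Type*} [Fintype V] [DecidableEq V] {G : SimpleGraph V} [DecidableRel G.Adj]
  {u : V → ℝ} {M : ℝ}

lemma abs_sum_le_mul_perim_of_two_mul_card_le (hG : G.Connected) (hM0 : 0 ≤ M)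
    (hM : ∀ S : Finset V, S.Nonempty → 2 * #S ≤ Fintype.card V →
      (G.induce (S : Set V)).Connected → |∑ v ∈ S, u v| / perim G S ≤ M)
    {S : Finset V} (hS : 2 * #S ≤ Fintype.card V) :
    |∑ v ∈ S, u v| ≤ M * perim G S := by
  induction S using Finset.strongInduction with
  | H S ih =>
  rcases S.eq_empty_or_nonempty with rfl | hne
  · simpa using mul_nonneg hM0 (perim_nonneg G ∅)
  by_cases hconn : (G.induce (S : Set V)).Connected
  · have hSc : Sᶜ.Nonempty := by
      rw [← card_pos, card_compl]
      have := hne.card_pos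
      omega
    exact (div_le_iff₀ (perim_pos G hG hne hSc)).mp (hM S hne hS hconn)
  obtain ⟨A, hAS, hA, hnadj⟩ := G.exists_ssubset_forall_not_adj_sdiff_of_not_connected hne hconn
  have hsub (B : Finset V) (hB : B ⊂ S) : 2 * #B ≤ Fintype.card V :=
    (Nat.mul_le_mul_left 2 (card_le_card hB.subset)).trans hS
  have hSA : S \ A ⊂ S := sdiff_ssubset hAS.subset hA
  have hunion : A ∪ (S \ A) = S := union_sdiff_of_subset hAS.subset
  calc |∑ v ∈ S, u v| = |∑ v ∈ A, u v + ∑ v ∈ S \ A, u v| := by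
        rw [← sum_union disjoint_sdiff, hunion]
    _ ≤ |∑ v ∈ A, u v| + |∑ v ∈ S \ A, u v| := abs_add_le _ _
    _ ≤ M * perim G A + M * perim G (S \ A) :=
        add_le_add (ih A hAS (hsub A hAS)) (ih _ hSA (hsub _ hSA))
    _ = M * perim G S := by
        rw [← mul_add, ← perim_union_of_forall_not_adj G disjoint_sdiff hnadj, hunion]

lemma abs_sum_le_mul_perim (hG : G.Connected) (hu : ∑ v, u v = 0) (hM0 : 0 ≤ M)
    (hM : ∀ S : Finset V, S.Nonempty → 2 * #S ≤ Fintype.card V →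
      (G.induce (S : Set V)).Connected → |∑ v ∈ S, u v| / perim G S ≤ M)
    (S : Finset V) : |∑ v ∈ S, u v| ≤ M * perim G S := by
  by_cases hS : 2 * #S ≤ Fintype.card V
  · exact abs_sum_le_mul_perim_of_two_mul_card_le hG hM0 hM hS
  have hSc : 2 * #Sᶜ ≤ Fintype.card V := by
    rw [card_compl]
    omega
  have hsum : ∑ v ∈ Sᶜ, u v = -∑ v ∈ S, u v := by
    rw [eq_neg_iff_add_eq_zero, sum_compl_add_sum, hu]
  simpa [hsum, perim_compl] using abs_sum_le_mul_perim_of_two_mul_card_le hG hM0 hM hSc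

end

section

variable {V : Type*} [Fintype V] [DecidableEq V] (G : SimpleGraph V) [DecidableRel G.Adj]

lemma tvNorm_add_mul_indicator {y : V → ℝ} {S : Finset V} {Δ : ℝ} (hΔ : 0 ≤ Δ)
    (hy : ∀ v ∈ S, ∀ w ∉ S, y w ≤ y v) :
    tvNorm G (fun v => y v + Δ * if v ∈ S then 1 else 0) = tvNorm G y + Δ * perim G S := by
  rw [perim, ← abs_of_nonneg hΔ, ← tvNorm_mul_add_const G Δ 0]
  refine tvNorm_eq_add_of_forall_adj G fun v w _ => ?_
  by_cases hv : v ∈ S <;> by_cases hw : w ∈ S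
  · simp [hv, hw]
  · simp only [hv, hw, if_true, if_false, mul_one, mul_zero, add_zero, zero_sub, abs_neg,
      abs_of_nonneg hΔ]
    rw [abs_of_nonpos (by linarith [hy v hv w hw]), abs_of_nonpos (by linarith [hy v hv w hw])]
    ring
  · simp only [hv, hw, if_true, if_false, mul_one, mul_zero, add_zero, sub_zero,
      abs_of_nonneg hΔ]
    rw [abs_of_nonneg (by linarith [hy w hw v hv]), abs_of_nonneg (by linarith [hy w hw v hv])]
    ring
  · simp [hv, hw]

variable {G} {u : V → ℝ} {M : ℝ}

lemma sum_mul_le_mul_tvNorm_of_sub_mul_indicator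
    (hcut : ∀ S : Finset V, ∑ v ∈ S, u v ≤ M * perim G S) {x : V → ℝ} {S : Finset V} {Δ : ℝ}
    (hΔ : 0 ≤ Δ) (hgap : ∀ v ∈ S, ∀ w ∉ S, x w + Δ ≤ x v)
    (hy : ∑ v, (x v - Δ * if v ∈ S then 1 else 0) * u v ≤
      M * tvNorm G (fun v => x v - Δ * if v ∈ S then 1 else 0)) :
    ∑ v, x v * u v ≤ M * tvNorm G x := by
  set y := fun v => x v - Δ * if v ∈ S then 1 else 0
  have htv : tvNorm G x = tvNorm G y + Δ * perim G S := by
    rw [← tvNorm_add_mul_indicator G hΔ]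
    · simp [y]
    · intro v hv w hw
      simpa [y, hv, hw, le_sub_iff_add_le] using hgap v hv w hw
  have hsum : ∑ v, x v * u v = ∑ v, y v * u v + Δ * ∑ v ∈ S, u v := by
    simp only [y, sub_mul, mul_sum, sum_sub_distrib, ite_mul, zero_mul, mul_ite, mul_one,
      mul_zero, sum_ite_mem, univ_inter, sub_add_cancel]
  calc ∑ v, x v * u v = ∑ v, y v * u v + Δ * ∑ v ∈ S, u v := hsum
    _ ≤ M * tvNorm G y + Δ * (M * perim G S) :=
        add_le_add hy (mul_le_mul_of_nonneg_left (hcut S) hΔ)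
    _ = M * tvNorm G x := by rw [htv]; ring

lemma sum_mul_le_mul_tvNorm_of_le (hu : ∑ v, u v = 0)
    (hcut : ∀ S : Finset V, ∑ v ∈ S, u v ≤ M * perim G S) {m : ℝ} (S : Finset V)
    (x : V → ℝ) (hxm : ∀ v, m ≤ x v) (hS : univ.filter (fun v => m < x v) = S) :
    ∑ v, x v * u v ≤ M * tvNorm G x := by
  induction S using Finset.strongInduction generalizing x with
  | H S ih =>
  rcases S.eq_empty_or_nonempty with rfl | hne
  · have hx : x = fun _ => m := funext fun v =>
      le_antisymm (not_lt.mp fun h => (filter_eq_empty_iff.mp hS) (mem_univ v) h) (hxm v)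
    simp [hx, ← mul_sum, hu, tvNorm_const]
  obtain ⟨v₂, hv₂S, hv₂⟩ := exists_mem_eq_inf' hne x
  set Δ := S.inf' hne x - m
  have hmS : ∀ v, v ∈ S ↔ m < x v := fun v => by simp [← hS]
  have hΔS : ∀ v ∈ S, m + Δ ≤ x v := fun v hv => by linarith [inf'_le x hv]
  have hΔ : 0 ≤ Δ := by linarith [hΔS v₂ hv₂S, (hmS v₂).mp hv₂S]
  refine sum_mul_le_mul_tvNorm_of_sub_mul_indicator hcut hΔ
    (fun v hv w hw => by linarith [hΔS v hv, (hmS w).not.mp hw]) (ih _ ?_ _ ?_ rfl)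
  · refine ssubset_iff_of_subset (fun v hv => ?_) |>.mpr ⟨v₂, hv₂S, ?_⟩
    · by_contra h
      simp [h, ← hmS] at hv
    · simp [hv₂S, Δ, hv₂]
  · intro v
    by_cases hv : v ∈ S
    · simpa [hv, le_sub_iff_add_le] using hΔS v hv
    · simpa [hv] using hxm v

lemma sum_mul_le_mul_tvNorm [Nonempty V] (hu : ∑ v, u v = 0)
    (hcut : ∀ S : Finset V, ∑ v ∈ S, u v ≤ M * perim G S) (x : V → ℝ) :
    ∑ v, x v * u v ≤ M * tvNorm G x := by
  obtain ⟨v₀, hv₀⟩ := Finite.exists_min x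
  exact sum_mul_le_mul_tvNorm_of_le hu hcut _ x hv₀ rfl

/-- If `perim G S = 0`, the witness is `0` and so is the left-hand side, as `r / 0 = 0`. -/
lemma exists_tvNorm_le_one_sum_mul_eq [Nonempty V] (hu : ∑ v, u v = 0) (S : Finset V) :
    ∃ x : V → ℝ, ∑ v, x v = 0 ∧ tvNorm G x ≤ 1 ∧
      |∑ v ∈ S, u v| / perim G S = ∑ v, x v * u v := by
  obtain ⟨ε, hε, hεS⟩ : ∃ ε : ℝ, |ε| = 1 ∧ |∑ v ∈ S, u v| = ε * ∑ v ∈ S, u v := by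
    rcases abs_choice (∑ v ∈ S, u v) with h | h
    exacts [⟨1, abs_one, by rw [h, one_mul]⟩, ⟨-1, by simp, by rw [h, neg_one_mul]⟩]
  set a := ε / perim G S
  set b := -a * #S / Fintype.card V
  have hV : (Fintype.card V : ℝ) ≠ 0 := Nat.cast_ne_zero.mpr Fintype.card_ne_zero
  refine ⟨fun v => a * (if v ∈ S then 1 else 0) + b, ?_, ?_, ?_⟩
  · simp only [sum_add_distrib, ← mul_sum, sum_boole, filter_mem_eq_inter, univ_inter,
      sum_const, card_univ, nsmul_eq_mul, b]
    field_simp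
    ring
  · rw [tvNorm_mul_add_const, ← perim, abs_div, hε, abs_of_nonneg (perim_nonneg G S), one_div]
    exact inv_mul_le_one
  · simp only [add_mul, sum_add_distrib, ite_mul, one_mul, zero_mul, mul_assoc,
      ← mul_sum, sum_ite_mem, univ_inter, hu, mul_zero, add_zero, a, hεS]
    ring

lemma dualNorm_eq_of_forall_sum_le [Nonempty V] (hu : ∑ v, u v = 0) (S₀ : Finset V)
    (hcut : ∀ S : Finset V, ∑ v ∈ S, u v ≤ |∑ v ∈ S₀, u v| / perim G S₀ * perim G S) :
    dualNorm G u = |∑ v ∈ S₀, u v| / perim G S₀ := by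
  refine IsGreatest.csSup_eq ⟨exists_tvNorm_le_one_sum_mul_eq hu S₀, ?_⟩
  rintro r ⟨x, -, hx, rfl⟩
  calc ∑ v, x v * u v ≤ |∑ v ∈ S₀, u v| / perim G S₀ * tvNorm G x :=
        sum_mul_le_mul_tvNorm hu hcut x
    _ ≤ |∑ v ∈ S₀, u v| / perim G S₀ :=
        mul_le_of_le_one_right (div_nonneg (abs_nonneg _) (perim_nonneg G S₀)) hx

end

/-- For zero-mean `u` on a finite connected graph, the dual TV norm is the
maximum of `|⟨u, 1_S⟩| / per(S)` over nonempty subsets `S` with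
`|S| ≤ |V|/2` such that the induced subgraph `G(S)` is connected. -/
theorem dualNorm_eq_max_connected_subsets {V : Type*} [Fintype V] [DecidableEq V]
    [Nontrivial V] (G : SimpleGraph V) [DecidableRel G.Adj] (hG : G.Connected)
    (u : V → ℝ) (hu : ∑ v, u v = 0) :
    IsGreatest
      {r | ∃ S : Finset V, S.Nonempty ∧ 2 * S.card ≤ Fintype.card V ∧
        (G.induce (S : Set V)).Connected ∧
        r = |∑ v ∈ S, u v| / perim G S}
      (dualNorm G u) := by
  classical
  let T := univ.filter fun S : Finset V =>
    S.Nonempty ∧ 2 * #S ≤ Fintype.card V ∧ (G.induce (S : Set V)).Connected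
  have hvT : {Classical.arbitrary V} ∈ T := by
    have hconn : (G.induce (({Classical.arbitrary V} : Finset V) : Set V)).Connected := by
      rw [coe_singleton, SimpleGraph.induce_singleton_eq_top]
      exact SimpleGraph.connected_top
    simp [T, Nat.succ_le_of_lt Fintype.one_lt_card, hconn]
  obtain ⟨S₀, hS₀T, hmax⟩ := T.exists_max_image (fun S => |∑ v ∈ S, u v| / perim G S) ⟨_, hvT⟩
  have hM0 : 0 ≤ |∑ v ∈ S₀, u v| / perim G S₀ := div_nonneg (abs_nonneg _) (perim_nonneg G S₀)
  have hcut := abs_sum_le_mul_perim hG hu hM0 fun S h₁ h₂ h₃ => hmax S (by simp [T, h₁, h₂, h₃])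
  rw [dualNorm_eq_of_forall_sum_le hu S₀ fun S => (le_abs_self _).trans (hcut S)]
  obtain ⟨hS₀, hS₀card, hS₀conn⟩ := (mem_filter.mp hS₀T).2
  refine ⟨⟨S₀, hS₀, hS₀card, hS₀conn, rfl⟩, ?_⟩
  rintro r ⟨S, h₁, h₂, h₃, rfl⟩
  exact hmax S (by simp [T, h₁, h₂, h₃])
end
end

section
/- Let G=(V,E) be a finite connected graph, x₀ ∈ ℝ^V, x̄₀ its average, and λ > 0. The following are equivalent: (1) the constant vector x̄₀·1_V is the unique minimizer over x ∈ ℝ^V of (1/2)‖x − x₀‖₂² + λ‖x‖_TV; (2) ‖x₀ − x̄₀·1_V‖_* ≤ λ; (3) for every nonempty A ⊆ V, |(1/|A|)Σ_{v∈A} x₀(v) − x̄₀| ≤ λ·per(A)/|A|. -/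
open Finset

noncomputable section

/-- The ROF (TV-regularized least squares) objective. -/
def rofObjective {V : Type*} [Fintype V] (G : SimpleGraph V) [DecidableRel G.Adj]
    (x₀ : V → ℝ) (lam : ℝ) (x : V → ℝ) : ℝ :=
  (1 / 2) * ∑ v, (x v - x₀ v) ^ 2 + lam * tvNorm G x

/-! Write `u = x₀ - x̄₀`, which has mean zero. Expanding the square around the constant `x̄₀`,
it is the strict minimiser iff `⟪y, u⟫ ≤ λ ‖y‖_TV` for every `y`, and by the definition of the
dual norm (after subtracting the mean of `y`) this is `‖u‖_* ≤ λ`. Testing against `±𝟙_A` gives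
`|∑_A u| ≤ λ per(A)`, which is condition (3) multiplied by `|A|`. Conversely, a discrete coarea
formula writes any `y` as its minimum plus a nonnegative combination of indicators of its
superlevel sets, along which both `⟪y, u⟫` and `‖y‖_TV` are additive, so the inequalities for
the sets `A` add up to `⟪y, u⟫ ≤ λ ‖y‖_TV`. -/

section

variable {V : Type*} [Fintype V] (G : SimpleGraph V) [DecidableRel G.Adj]

lemma tvNorm_congr {x y : V → ℝ} (h : ∀ v w, G.Adj v w → x w - x v = y w - y v) :
    tvNorm G x = tvNorm G y := by
  unfold tvNorm
  congr 1
  refine sum_congr rfl fun v _ => sum_congr rfl fun w _ => ?_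
  split_ifs with hvw
  · rw [h v w hvw]
  · rfl

lemma tvNorm_sub_const (x : V → ℝ) (c : ℝ) : tvNorm G (x - fun _ => c) = tvNorm G x :=
  tvNorm_congr G fun v w _ => by simp only [Pi.sub_apply]; ring

lemma tvNorm_smul (t : ℝ) (x : V → ℝ) : tvNorm G (t • x) = |t| * tvNorm G x := by
  simp only [tvNorm, Pi.smul_apply, smul_eq_mul, ← mul_sub, abs_mul, mul_left_comm |t|,
    mul_sum, mul_ite, mul_zero]

lemma tvNorm_add_of_comonotone {x y : V → ℝ}
    (h : ∀ v w, G.Adj v w → 0 ≤ (x w - x v) * (y w - y v)) :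
    tvNorm G (x + y) = tvNorm G x + tvNorm G y := by
  simp only [tvNorm, ← mul_add, ← sum_add_distrib]
  congr 1
  refine sum_congr rfl fun v _ => sum_congr rfl fun w _ => ?_
  split_ifs with hvw
  · rw [Pi.add_apply, Pi.add_apply, add_sub_add_comm]
    exact (abs_add_eq_add_abs_iff _ _).mpr (mul_nonneg_iff.mp (h v w hvw))
  · simp

lemma abs_sub_le_tvNorm_of_adj {v w : V} (hvw : G.Adj v w) (x : V → ℝ) :
    |x w - x v| ≤ tvNorm G x := by
  let f : V × V → ℝ := fun p => if G.Adj p.1 p.2 then |x p.2 - x p.1| else 0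
  have hpair : f (v, w) + f (w, v) ≤ ∑ p ∈ univ ×ˢ univ, f p :=
    add_le_sum (fun p _ => by dsimp only [f]; split_ifs <;> positivity) (by simp) (by simp)
      (by simp [G.ne_of_adj hvw])
  simp only [f, hvw, hvw.symm, if_true, abs_sub_comm (x v), sum_product] at hpair
  rw [tvNorm]
  linarith

lemma sum_sub_mean_eq_zero_s5 [Nonempty V] (x : V → ℝ) :
    ∑ v, (x v - (∑ w, x w) / Fintype.card V) = 0 := by
  rw [sum_sub_distrib, sum_const, card_univ, nsmul_eq_mul,
    mul_div_cancel₀ _ (Nat.cast_ne_zero.mpr Fintype.card_ne_zero), sub_self]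

lemma rofObjective_eq_add (x₀ : V → ℝ) (lam c : ℝ) (x : V → ℝ) :
    rofObjective G x₀ lam x = rofObjective G x₀ lam (fun _ => c) +
      ((1 / 2) * ∑ v, (x v - c) ^ 2 - (x - fun _ => c) ⬝ᵥ (fun v => x₀ v - c)
        + lam * tvNorm G (x - fun _ => c)) := by
  suffices ∑ v, (x v - x₀ v) ^ 2 = ∑ v, (c - x₀ v) ^ 2 + ∑ v, (x v - c) ^ 2
      - 2 * ∑ v, (x v - c) * (x₀ v - c) by
    simp only [rofObjective, tvNorm_sub_const, tvNorm_const, dotProduct, Pi.sub_apply]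
    linarith
  rw [mul_sum, ← sum_add_distrib, ← sum_sub_distrib]
  exact sum_congr rfl fun v _ => by ring

lemma forall_lt_rofObjective_iff (x₀ : V → ℝ) (lam c : ℝ) :
    (∀ x : V → ℝ, x ≠ (fun _ => c) →
        rofObjective G x₀ lam (fun _ => c) < rofObjective G x₀ lam x) ↔
      ∀ y : V → ℝ, y ⬝ᵥ (fun v => x₀ v - c) ≤ lam * tvNorm G y := by
  constructor
  · intro h y
    by_contra! hlt
    set a := lam * tvNorm G y - y ⬝ᵥ (fun v => x₀ v - c)
    set K := ∑ v, y v ^ 2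
    have hK : 0 ≤ K := sum_nonneg fun v _ => sq_nonneg (y v)
    have hy : y ≠ 0 := by
      rintro rfl
      simp [dotProduct, tvNorm] at hlt
    -- Moving from `c` to `c + s • y` changes the objective by `s * a + s ^ 2 * K / 2`,
    -- which is negative for this small `s > 0` because `a < 0`.
    set s := -a / (K + 1)
    have hs : 0 < s := div_pos (by linarith) (by linarith)
    have hsK : s * (K + 1) = -a := div_mul_cancel₀ _ (by linarith)
    have := h ((fun _ => c) + s • y) (by simpa [hs.ne'] using hy)
    rw [rofObjective_eq_add G x₀ lam c ((fun _ => c) + s • y), add_sub_cancel_left, tvNorm_smul,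
      smul_dotProduct, abs_of_pos hs, lt_add_iff_pos_right] at this
    simp only [Pi.add_apply, add_sub_cancel_left, Pi.smul_apply, smul_eq_mul, mul_pow,
      ← mul_sum] at this
    nlinarith [mul_pos hs hs]
  · intro h x hx
    rw [rofObjective_eq_add G x₀ lam c x, lt_add_iff_pos_right]
    obtain ⟨v, hv⟩ := Function.ne_iff.mp hx
    have hpos : 0 < ∑ v, (x v - c) ^ 2 :=
      sum_pos' (fun _ _ => sq_nonneg _)
        ⟨v, mem_univ v, pow_two_pos_of_ne_zero (sub_ne_zero.mpr hv)⟩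
    linarith [h (x - fun _ => c)]

variable [DecidableEq V]

lemma perim_eq_tvNorm_indicator (A : Finset V) :
    perim G A = tvNorm G ((A : Set V).indicator 1) := by
  unfold perim
  congr 1
  ext v
  simp [Set.indicator_apply]

lemma indicator_dotProduct (A : Finset V) (u : V → ℝ) :
    (A : Set V).indicator 1 ⬝ᵥ u = ∑ v ∈ A, u v := by
  simp [dotProduct, Set.indicator_apply, sum_ite_mem]

lemma one_le_perim (hG : G.Connected) {A : Finset V} (hA : A.Nonempty) (hA' : A ≠ univ) :
    1 ≤ perim G A := by
  obtain ⟨a, ha⟩ := hA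
  obtain ⟨b, hb⟩ := not_forall.mp (mt eq_univ_iff_forall.mpr hA')
  obtain ⟨p⟩ := hG.preconnected a b
  obtain ⟨d, -, hd, hd'⟩ := p.exists_boundary_dart (A : Set V) ha hb
  have := abs_sub_le_tvNorm_of_adj G d.adj ((A : Set V).indicator 1)
  rw [perim_eq_tvNorm_indicator]
  simpa [Set.indicator_of_mem hd, Set.indicator_of_notMem hd'] using this

lemma tvNorm_add_smul_indicator {x : V → ℝ} {A : Finset V} {t : ℝ} (ht : 0 ≤ t)
    (hx : ∀ v ∈ A, ∀ w ∉ A, x w ≤ x v) :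
    tvNorm G (x + t • (A : Set V).indicator 1) = tvNorm G x + t * perim G A := by
  rw [tvNorm_add_of_comonotone, tvNorm_smul, abs_of_nonneg ht, perim_eq_tvNorm_indicator]
  intro v w _
  by_cases hv : v ∈ A <;> by_cases hw : w ∈ A <;>
    simp only [Pi.smul_apply, smul_eq_mul, SetLike.mem_coe, hv, hw, Set.indicator_of_mem,
      Set.indicator_of_notMem, not_false_eq_true, Pi.one_apply, sub_self, mul_zero, le_refl]
  · nlinarith [hx v hv w hw]
  · nlinarith [hx w hw v hv]

lemma dotProduct_le_mul_tvNorm_of_sum_le {u : V → ℝ} {lam : ℝ} (hu : ∑ v, u v = 0)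
    (hA : ∀ A : Finset V, A.Nonempty → ∑ v ∈ A, u v ≤ lam * perim G A) (y : V → ℝ) :
    y ⬝ᵥ u ≤ lam * tvNorm G y := by
  obtain ⟨m, hm⟩ := (Set.finite_range y).bddBelow
  suffices key : ∀ A : Finset V, ∀ y : V → ℝ, (∀ v, m ≤ y v) →
      ({v | m < y v} : Finset V) = A → y ⬝ᵥ u ≤ lam * tvNorm G y from
    key _ y (fun v => hm ⟨v, rfl⟩) rfl
  -- Induct on the superlevel set `A = {m < y}`: subtracting `t • 𝟙_A`, where `m + t` is the
  -- least value of `y` on `A`, keeps `y ≥ m` and shrinks `A`.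
  intro A
  induction A using Finset.strongInduction with
  | H A ih =>
  intro y hym hyA
  have hmemA : ∀ v, v ∈ A ↔ m < y v := fun v => by simp [← hyA]
  rcases A.eq_empty_or_nonempty with rfl | hne
  · have hy : y = fun _ => m := funext fun v =>
      le_antisymm (not_lt.mp fun h => by simpa using (hmemA v).mpr h) (hym v)
    simp [hy, dotProduct, ← mul_sum, hu, tvNorm_const]
  obtain ⟨v₁, hv₁, hmin⟩ := A.exists_min_image y hne
  set t := y v₁ - m with ht
  set y' := y - t • (A : Set V).indicator 1
  have hy'A : ∀ v ∈ A, y' v = y v - t := fun v hv => by simp [y', hv]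
  have hy'Ac : ∀ v ∉ A, y' v = y v := fun v hv => by simp [y', hv]
  have hy'm : ∀ v, m ≤ y' v := fun v => by
    by_cases hv : v ∈ A
    · rw [hy'A v hv]; linarith [hmin v hv]
    · rw [hy'Ac v hv]; exact hym v
  have hy'sub : ({v | m < y' v} : Finset V) ⊂ A := by
    refine ssubset_iff_of_subset (fun v hv => ?_) |>.mpr ⟨v₁, hv₁, by simp [hy'A v₁ hv₁, ht]⟩
    by_contra hvA
    simp only [mem_filter, mem_univ, true_and, hy'Ac v hvA] at hv
    exact hvA ((hmemA v).mpr hv)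
  have hy'mono : ∀ v ∈ A, ∀ w ∉ A, y' w ≤ y' v := fun v hv w hw => by
    rw [hy'A v hv, hy'Ac w hw]
    linarith [hmin v hv, not_lt.mp (mt (hmemA w).mpr hw)]
  have ht0 : 0 < t := by linarith [(hmemA v₁).mp hv₁]
  have hy : y = y' + t • (A : Set V).indicator 1 := (sub_add_cancel _ _).symm
  calc y ⬝ᵥ u = y' ⬝ᵥ u + t * ∑ v ∈ A, u v := by
        rw [hy, add_dotProduct, smul_dotProduct, indicator_dotProduct, smul_eq_mul]
    _ ≤ lam * tvNorm G y' + t * (lam * perim G A) := by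
        gcongr
        exacts [ih _ hy'sub y' hy'm rfl, hA A hne]
    _ = lam * tvNorm G y := by
        rw [hy, tvNorm_add_smul_indicator G ht0.le hy'mono]; ring

lemma forall_dotProduct_le_iff {u : V → ℝ} {lam : ℝ} (hu : ∑ v, u v = 0) :
    (∀ y : V → ℝ, y ⬝ᵥ u ≤ lam * tvNorm G y) ↔
      ∀ A : Finset V, A.Nonempty → |∑ v ∈ A, u v| ≤ lam * perim G A := by
  refine ⟨fun h A _ => abs_le.mpr ⟨?_, ?_⟩, fun h =>
    dotProduct_le_mul_tvNorm_of_sum_le G hu fun A hA => (le_abs_self _).trans (h A hA)⟩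
  · have := h ((-1 : ℝ) • (A : Set V).indicator 1)
    rw [smul_dotProduct, indicator_dotProduct, tvNorm_smul, abs_neg, abs_one, one_mul,
      ← perim_eq_tvNorm_indicator, smul_eq_mul] at this
    linarith
  · simpa [indicator_dotProduct, ← perim_eq_tvNorm_indicator] using h ((A : Set V).indicator 1)

lemma dotProduct_le_sum_abs_mul_tvNorm (hG : G.Connected) {u : V → ℝ} (hu : ∑ v, u v = 0)
    (y : V → ℝ) : y ⬝ᵥ u ≤ (∑ v, |u v|) * tvNorm G y := by
  refine dotProduct_le_mul_tvNorm_of_sum_le G hu (fun A hA => ?_) y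
  have hsum : ∑ v ∈ A, u v ≤ ∑ v, |u v| :=
    (sum_le_sum fun v _ => le_abs_self (u v)).trans
      (sum_le_sum_of_subset_of_nonneg (subset_univ A) fun v _ _ => abs_nonneg (u v))
  rcases eq_or_ne A univ with rfl | hA'
  · rw [hu]
    exact mul_nonneg (sum_nonneg fun v _ => abs_nonneg (u v)) (tvNorm_nonneg G _)
  · exact hsum.trans (le_mul_of_one_le_right (sum_nonneg fun v _ => abs_nonneg (u v))
      (one_le_perim G hG hA hA'))

lemma bddAbove_dualNorm_set (hG : G.Connected) {u : V → ℝ} (hu : ∑ v, u v = 0) :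
    BddAbove {r | ∃ x : V → ℝ, (∑ v, x v = 0) ∧ tvNorm G x ≤ 1 ∧ r = ∑ v, x v * u v} := by
  refine ⟨∑ v, |u v|, ?_⟩
  rintro r ⟨x, -, hx, rfl⟩
  calc x ⬝ᵥ u ≤ (∑ v, |u v|) * tvNorm G x := dotProduct_le_sum_abs_mul_tvNorm G hG hu x
    _ ≤ ∑ v, |u v| := mul_le_of_le_one_right (sum_nonneg fun v _ => abs_nonneg (u v)) hx

lemma dotProduct_le_dualNorm_mul_tvNorm (hG : G.Connected) {u : V → ℝ} (hu : ∑ v, u v = 0)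
    (y : V → ℝ) : y ⬝ᵥ u ≤ dualNorm G u * tvNorm G y := by
  rcases (tvNorm_nonneg G y).eq_or_lt with h0 | hpos
  · simpa [← h0] using dotProduct_le_sum_abs_mul_tvNorm G hG hu y
  have := hG.nonempty
  set c := (∑ v, y v) / Fintype.card V
  set x := (tvNorm G y)⁻¹ • (y - fun _ => c)
  have hx0 : ∑ v, x v = 0 := by
    simp only [x, c, Pi.smul_apply, Pi.sub_apply, smul_eq_mul, ← mul_sum, sum_sub_mean_eq_zero_s5,
      mul_zero]
  have hx : x ⬝ᵥ u = (tvNorm G y)⁻¹ * (y ⬝ᵥ u) := by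
    have hc : (fun _ => c) ⬝ᵥ u = 0 := by rw [dotProduct, ← mul_sum, hu, mul_zero]
    rw [smul_dotProduct, sub_dotProduct, hc, sub_zero, smul_eq_mul]
  have hx1 : tvNorm G x ≤ 1 := by
    rw [tvNorm_smul, tvNorm_sub_const, abs_inv, abs_of_pos hpos, inv_mul_cancel₀ hpos.ne']
  have := le_csSup (bddAbove_dualNorm_set G hG hu) ⟨x, hx0, hx1, hx.symm⟩
  rwa [← dualNorm, inv_mul_le_iff₀ hpos, mul_comm] at this

lemma dualNorm_le_iff (hG : G.Connected) {u : V → ℝ} (hu : ∑ v, u v = 0) {lam : ℝ}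
    (hlam : 0 ≤ lam) : dualNorm G u ≤ lam ↔ ∀ y : V → ℝ, y ⬝ᵥ u ≤ lam * tvNorm G y := by
  refine ⟨fun h y => (dotProduct_le_dualNorm_mul_tvNorm G hG hu y).trans
    (mul_le_mul_of_nonneg_right h (tvNorm_nonneg G y)), fun h => Real.sSup_le ?_ hlam⟩
  rintro r ⟨x, -, hx, rfl⟩
  exact (h x).trans (mul_le_of_le_one_right hlam hx)

end

lemma abs_sum_div_card_sub_le_iff {ι : Type*} {A : Finset ι} (hA : A.Nonempty) (f : ι → ℝ)
    (c p : ℝ) : |(∑ i ∈ A, f i) / #A - c| ≤ p / #A ↔ |∑ i ∈ A, (f i - c)| ≤ p := by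
  have hA' : (0 : ℝ) < #A := by exact_mod_cast hA.card_pos
  have hdiv : (∑ i ∈ A, f i) / #A - c = (∑ i ∈ A, f i - #A * c) / #A := by field_simp
  rw [sum_sub_distrib, sum_const, nsmul_eq_mul, hdiv, abs_div, abs_of_pos hA',
    div_le_div_iff_of_pos_right hA']

/-- Average consensus via TV regularization: the constant `x̄₀` is the unique
minimizer of the ROF energy iff `‖x₀ - x̄₀ 1‖_* ≤ λ` iff every nonempty `A ⊆ V`
satisfies `|avg_A x₀ - x̄₀| ≤ λ per(A)/|A|`. -/
theorem average_consensus_characterization {V : Type*} [Fintype V] [DecidableEq V]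
    (G : SimpleGraph V) [DecidableRel G.Adj] (hG : G.Connected)
    (x₀ : V → ℝ) (lam : ℝ) (hlam : 0 < lam) :
    ((∀ x : V → ℝ, x ≠ (fun _ => (∑ v, x₀ v) / (Fintype.card V : ℝ)) →
        rofObjective G x₀ lam (fun _ => (∑ v, x₀ v) / (Fintype.card V : ℝ))
          < rofObjective G x₀ lam x)
      ↔ dualNorm G (fun v => x₀ v - (∑ w, x₀ w) / (Fintype.card V : ℝ)) ≤ lam)
    ∧
    (dualNorm G (fun v => x₀ v - (∑ w, x₀ w) / (Fintype.card V : ℝ)) ≤ lam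
      ↔ ∀ A : Finset V, A.Nonempty →
          |(∑ v ∈ A, x₀ v) / (A.card : ℝ) - (∑ w, x₀ w) / (Fintype.card V : ℝ)|
            ≤ lam * perim G A / (A.card : ℝ)) := by
  have := hG.nonempty
  have hdual := dualNorm_le_iff G hG (sum_sub_mean_eq_zero_s5 x₀) hlam.le
  exact ⟨(forall_lt_rofObjective_iff G x₀ lam _).trans hdual.symm,
    hdual.trans <| (forall_dotProduct_le_iff G (sum_sub_mean_eq_zero_s5 x₀)).trans <|
      forall₂_congr fun A hA => (abs_sum_div_card_sub_le_iff hA x₀ _ _).symm⟩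
end
end

section
/- Let V be a finite set with |V| ≥ 2, and let B₀ = { u ∈ ℝ^V : Σ_v u(v) = 0 and ‖u‖_∞ ≤ 1 }. Then the set of extremal points of the convex polytope B₀ is exactly the set 𝒰 of vectors all of whose coordinates are ±1 except, when |V| is odd, exactly one coordinate equal to 0, with the numbers of +1's and −1's balanced so the coordinates sum to zero (i.e., all permutations of the vector d = (−1,…,−1,0,1,…,1) if |V| is odd, and of d = (−1,…,−1,1,…,1) if |V| is even). -/
/-!
An extreme point `u` of `B₀` has at most one coordinate with `|u v| < 1`: two such coordinates
`v ≠ w` would let us move `u` by `±ε (e_v - e_w)` inside `B₀`. The other coordinates are `±1`,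
and a sum of `±1`'s is an integer of the same parity as the number of terms; so the free
coordinate, being minus such a sum and of absolute value `< 1`, is `0`, and the parity of `|V|`
decides whether it exists. Conversely, a coordinate `±1` is an extreme point of `[-1, 1]`, so a
segment through such a `u` is constant on all but at most one coordinate, and the zero sum
pins down the last one.
-/

open Finset

lemma eq_zero_of_mem_extremePoints_of_add_mem_of_sub_mem {𝕜 E : Type*} [Field 𝕜] [LinearOrder 𝕜]
    [IsStrictOrderedRing 𝕜] [AddCommGroup E] [Module 𝕜 E] {A : Set E} {x z : E}
    (hx : x ∈ A.extremePoints 𝕜) (hadd : x + z ∈ A) (hsub : x - z ∈ A) : z = 0 := by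
  have hmid : x ∈ openSegment 𝕜 (x + z) (x - z) :=
    ⟨1 / 2, 1 / 2, by norm_num, by norm_num, by norm_num, by module⟩
  simpa using hx.2 hadd hsub hmid

lemma eq_of_abs_eq_one_of_mem_openSegment {a b c : ℝ} (hc : |c| = 1) (ha : |a| ≤ 1)
    (hb : |b| ≤ 1) (hseg : c ∈ openSegment ℝ a b) : a = c := by
  have hext : c ∈ (Set.Icc (-1 : ℝ) 1).extremePoints ℝ := by
    rw [Set.extremePoints_Icc (by norm_num)]
    rcases (abs_eq zero_le_one).1 hc with h | h <;> simp [h]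
  exact hext.2 (abs_le.1 ha) (abs_le.1 hb) hseg

section SignSums

variable {ι : Type*} {s : Finset ι} {u : ι → ℝ}

lemma sum_eq_two_mul_card_filter_sub_card (h : ∀ i ∈ s, u i = 1 ∨ u i = -1) :
    ∑ i ∈ s, u i = 2 * #{i ∈ s | u i = 1} - #s := by
  have hneg : ∀ i ∈ s.filter (fun i => u i ≠ 1), u i = -1 := fun i hi =>
    (h i (mem_filter.1 hi).1).resolve_left (mem_filter.1 hi).2
  rw [← sum_filter_add_sum_filter_not s (fun i => u i = 1),
    sum_congr rfl (fun i hi => (mem_filter.1 hi).2), sum_congr rfl hneg,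
    ← card_filter_add_card_filter_not (s := s) (fun i => u i = 1)]
  simp only [sum_const, nsmul_eq_mul, mul_one, Nat.cast_add]
  ring

lemma even_card_of_sum_eq_zero (h : ∀ i ∈ s, u i = 1 ∨ u i = -1)
    (hsum : ∑ i ∈ s, u i = 0) : Even #s := by
  rw [sum_eq_two_mul_card_filter_sub_card h] at hsum
  refine ⟨#{i ∈ s | u i = 1}, ?_⟩
  exact_mod_cast (by linarith : (#s : ℝ) = #{i ∈ s | u i = 1} + #{i ∈ s | u i = 1})

lemma sum_eq_zero_of_abs_sum_lt_one (h : ∀ i ∈ s, u i = 1 ∨ u i = -1)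
    (hlt : |∑ i ∈ s, u i| < 1) : ∑ i ∈ s, u i = 0 := by
  rw [sum_eq_two_mul_card_filter_sub_card h] at hlt ⊢
  have hint : |(2 * #{i ∈ s | u i = 1} - #s : ℤ)| < 1 := by exact_mod_cast hlt
  exact_mod_cast Int.abs_lt_one_iff.1 hint

end SignSums

section ZeroSumCube

variable {V : Type*} [Fintype V]

def zeroSumCube (V : Type*) [Fintype V] : Set (V → ℝ) :=
  {u | (∑ v, u v = 0) ∧ ∀ v, |u v| ≤ 1}

def balancedSignVectors (V : Type*) [Fintype V] : Set (V → ℝ) :=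
  {u | (∑ v, u v = 0) ∧ (∀ v, u v = 1 ∨ u v = -1 ∨ u v = 0) ∧
    #{v | u v = 0} = if Even (Fintype.card V) then 0 else 1}

lemma add_mem_zeroSumCube {u z : V → ℝ} (hu : u ∈ zeroSumCube V) (hz : ∑ v, z v = 0)
    (hbound : ∀ v, |z v| ≤ 1 - |u v|) : u + z ∈ zeroSumCube V := by
  refine ⟨by simp [sum_add_distrib, hu.1, hz], fun v => ?_⟩
  calc |u v + z v| ≤ |u v| + |z v| := abs_add_le _ _
    _ ≤ 1 := by linarith [hbound v]

lemma subsingleton_abs_lt_one_of_mem_extremePoints {u : V → ℝ}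
    (hu : u ∈ (zeroSumCube V).extremePoints ℝ) : {v | |u v| < 1}.Subsingleton := by
  classical
  intro v (hv : |u v| < 1) w (hw : |u w| < 1)
  by_contra hvw
  set ε := min (1 - |u v|) (1 - |u w|)
  have hε : 0 < ε := lt_min (sub_pos.2 hv) (sub_pos.2 hw)
  set z : V → ℝ := Pi.single v ε - Pi.single w ε
  have hz : ∑ t, z t = 0 := by simp [z, sum_sub_distrib]
  have hbound : ∀ t, |z t| ≤ 1 - |u t| := by
    intro t
    by_cases htv : t = v
    · subst htv
      simp [z, hvw, abs_of_pos hε, ε]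
    by_cases htw : t = w
    · subst htw
      simp [z, Ne.symm hvw, abs_of_pos hε, ε]
    · simp [z, htv, htw, hu.1.2 t]
  have hz0 : z = 0 := eq_zero_of_mem_extremePoints_of_add_mem_of_sub_mem hu
    (add_mem_zeroSumCube hu.1 hz hbound)
    (by simpa [sub_eq_add_neg] using
      add_mem_zeroSumCube (z := -z) hu.1 (by simp [hz]) (by simpa using hbound))
  exact hε.ne' (by simpa [z, hvw] using congrFun hz0 v)

lemma mem_balancedSignVectors_of_forall_abs_eq_one {u : V → ℝ} (hsum : ∑ v, u v = 0)
    (h : ∀ v, |u v| = 1) : u ∈ balancedSignVectors V := by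
  have hsign : ∀ v, u v = 1 ∨ u v = -1 := fun v => (abs_eq zero_le_one).1 (h v)
  have heven : Even (Fintype.card V) := even_card_of_sum_eq_zero (fun v _ => hsign v) hsum
  refine ⟨hsum, fun v => (hsign v).imp_right Or.inl, ?_⟩
  rw [if_pos heven, card_eq_zero, filter_eq_empty_iff]
  intro v _ h0
  simpa [h0] using h v

lemma mem_balancedSignVectors_of_abs_lt_one {u : V → ℝ} {v₀ : V} (hsum : ∑ v, u v = 0)
    (hv₀ : |u v₀| < 1) (h : ∀ v ≠ v₀, |u v| = 1) : u ∈ balancedSignVectors V := by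
  classical
  have hsign : ∀ v ∈ univ.erase v₀, u v = 1 ∨ u v = -1 := fun v hv =>
    (abs_eq zero_le_one).1 (h v (ne_of_mem_erase hv))
  have hrest : ∑ v ∈ univ.erase v₀, u v = -u v₀ := by
    linarith [add_sum_erase univ u (mem_univ v₀)]
  have hrest0 : ∑ v ∈ univ.erase v₀, u v = 0 :=
    sum_eq_zero_of_abs_sum_lt_one hsign (by rwa [hrest, abs_neg])
  have hzero : u v₀ = 0 := by linarith
  have hodd : ¬ Even (Fintype.card V) := by
    have heven := even_card_of_sum_eq_zero hsign hrest0
    rw [card_erase_of_mem (mem_univ _), card_univ] at heven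
    have hpos : 0 < Fintype.card V := Fintype.card_pos_iff.2 ⟨v₀⟩
    simpa [Nat.even_sub hpos] using heven
  refine ⟨hsum, fun v => ?_, ?_⟩
  · by_cases hv : v = v₀
    · exact .inr (.inr (hv ▸ hzero))
    · exact (hsign v (mem_erase.2 ⟨hv, mem_univ v⟩)).imp_right Or.inl
  · rw [if_neg hodd, card_eq_one]
    refine ⟨v₀, eq_singleton_iff_unique_mem.2 ⟨by simp [hzero], fun v hv => ?_⟩⟩
    by_contra hne
    simpa [(mem_filter.1 hv).2] using h v hne

lemma extremePoints_zeroSumCube_subset :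
    (zeroSumCube V).extremePoints ℝ ⊆ balancedSignVectors V := by
  intro u hu
  have hsub := subsingleton_abs_lt_one_of_mem_extremePoints hu
  obtain ⟨⟨hsum, hle⟩, -⟩ := hu
  by_cases h : ∃ v₀, |u v₀| < 1
  · obtain ⟨v₀, hv₀⟩ := h
    exact mem_balancedSignVectors_of_abs_lt_one hsum hv₀ fun v hv =>
      (hle v).antisymm (not_lt.1 fun hlt => hv (hsub hlt hv₀))
  · push Not at h
    exact mem_balancedSignVectors_of_forall_abs_eq_one hsum fun v => (hle v).antisymm (h v)

lemma eq_of_sum_eq_of_subsingleton_ne {x u : V → ℝ} (hsum : ∑ v, x v = ∑ v, u v)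
    (h : {v | x v ≠ u v}.Subsingleton) : x = u := by
  funext v
  by_contra hv
  have hsingle : ∑ w, (x w - u w) = x v - u v :=
    sum_eq_single v (fun w _ hw => sub_eq_zero.2 (by_contra fun hne => hw (h hne hv))) (by simp)
  rw [sum_sub_distrib, hsum, sub_self] at hsingle
  exact hv (sub_eq_zero.1 hsingle.symm)

lemma balancedSignVectors_subset_extremePoints :
    balancedSignVectors V ⊆ (zeroSumCube V).extremePoints ℝ := by
  rintro u ⟨hsum, hval, hcard⟩
  have hmem : u ∈ zeroSumCube V := ⟨hsum, fun v => by rcases hval v with h | h | h <;> simp [h]⟩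
  have hzero : {v | u v = 0}.Subsingleton := fun v hv w hw =>
    card_le_one.1 (hcard.trans_le (by split_ifs <;> norm_num)) v (by simpa using hv) w
      (by simpa using hw)
  refine ⟨hmem, fun x hx y hy hseg => eq_of_sum_eq_of_subsingleton_ne (hx.1.trans hsum.symm)
    (hzero.anti fun v (hne : x v ≠ u v) => ?_)⟩
  by_contra hv
  have hsign : |u v| = 1 := by rcases hval v with h | h | h <;> simp_all
  obtain ⟨a, b, ha, hb, hab, hu⟩ := hseg
  exact hne (eq_of_abs_eq_one_of_mem_openSegment hsign (hx.2 v) (hy.2 v)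
    ⟨a, b, ha, hb, hab, by simp [← hu]⟩)

end ZeroSumCube

theorem extremePoints_B0_general {V : Type*} [Fintype V] :
    Set.extremePoints ℝ {u : V → ℝ | (∑ v, u v = 0) ∧ ∀ v, |u v| ≤ 1}
      = {u : V → ℝ | (∑ v, u v = 0) ∧ (∀ v, u v = 1 ∨ u v = -1 ∨ u v = 0) ∧
          (Finset.univ.filter fun v => u v = 0).card
            = (if Even (Fintype.card V) then 0 else 1)} :=
  extremePoints_zeroSumCube_subset.antisymm balancedSignVectors_subset_extremePoints

/-- Extremal points of the polytope `B₀ = {u : ∑ u = 0, ‖u‖_∞ ≤ 1}`: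
they are exactly the zero-mean vectors with all coordinates `±1`, except
exactly one coordinate equal to `0` when `|V|` is odd. -/
theorem extremePoints_B0 {V : Type*} [Fintype V] [DecidableEq V]
    (h2 : 2 ≤ Fintype.card V) :
    Set.extremePoints ℝ {u : V → ℝ | (∑ v, u v = 0) ∧ ∀ v, |u v| ≤ 1}
      = {u : V → ℝ | (∑ v, u v = 0) ∧ (∀ v, u v = 1 ∨ u v = -1 ∨ u v = 0) ∧
          (Finset.univ.filter fun v => u v = 0).card
            = (if Even (Fintype.card V) then 0 else 1)} :=
  extremePoints_B0_general
end

section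
/- Let H be a finite-dimensional Euclidean space and f : H → ℝ convex and continuous with bounded lower level sets {x : f(x) ≤ y}, and suppose there is C > 0 with ‖g‖ ≤ C(1+‖x‖) for all x and all g ∈ ∂f(x). Let (γ_n) be positive with Σγ_n = ∞ and Σγ_n² < ∞. Then any sequence defined by x_{n+1} = x_n − γ_n g_n with g_n ∈ ∂f(x_n) converges to the set of minimizers {x : f(x) = inf f}. -/
/-!
The subgradient inequality gives, for every `z`,
`‖x (n+1) - z‖² ≤ ‖x n - z‖² - 2 γ n (f (x n) - f z) + γ n² ‖g n‖²`.
With `z` a minimiser and subgradients of linear growth this is a discrete Grönwall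
inequality, so `∑ γ n² < ∞` keeps the iterates, hence the subgradients, bounded. With `z` the
nearest minimiser it makes `d n = dist (x n, S)` quasi-Fejér:
`d (n+1)² ≤ d n² - 2 γ n (f (x n) - min f) + O(γ n²)`. So `d n²` converges and
`∑ γ n (f (x n) - min f) < ∞`; as `∑ γ n = ∞`, `f (x n)` comes arbitrarily close to `min f`
infinitely often, where compactness of the sublevel sets makes `d n` small. The limit is `0`.
-/

open Filter
open scoped RealInnerProductSpace
open Metric Finset

theorem le_mul_exp_tsum_of_succ_le {a u v : ℕ → ℝ} (hu : ∀ n, 0 ≤ u n) (hv : ∀ n, 0 ≤ v n)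
    (hu' : Summable u) (hv' : Summable v) (ha₀ : 0 ≤ a 0)
    (ha : ∀ n, a (n + 1) ≤ (1 + u n) * a n + v n) (n : ℕ) :
    a n ≤ (a 0 + ∑' k, v k) * Real.exp (∑' k, u k) := by
  have hpartial : ∀ n, a n ≤ (a 0 + ∑ k ∈ range n, v k) * Real.exp (∑ k ∈ range n, u k) := by
    intro n
    induction n with
    | zero => simp
    | succ n ih =>
      have hA : 0 ≤ a 0 + ∑ k ∈ range n, v k := add_nonneg ha₀ (sum_nonneg fun k _ => hv k)
      have hE : 1 ≤ Real.exp (∑ k ∈ range n, u k) :=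
        Real.one_le_exp (sum_nonneg fun k _ => hu k)
      have hu1 : 1 + u n ≤ Real.exp (u n) := by linarith [Real.add_one_le_exp (u n)]
      rw [sum_range_succ, sum_range_succ, Real.exp_add]
      calc a (n + 1) ≤ (1 + u n) * ((a 0 + ∑ k ∈ range n, v k) * Real.exp (∑ k ∈ range n, u k))
            + v n := (ha n).trans (by gcongr; linarith [hu n])
        _ ≤ Real.exp (u n) * ((a 0 + ∑ k ∈ range n, v k) * Real.exp (∑ k ∈ range n, u k))
            + v n * (Real.exp (∑ k ∈ range n, u k) * Real.exp (u n)) := by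
          gcongr
          exact le_mul_of_one_le_right (hv n)
            (one_le_mul_of_one_le_of_one_le hE (Real.one_le_exp (hu n)))
        _ = _ := by ring
  calc a n ≤ (a 0 + ∑ k ∈ range n, v k) * Real.exp (∑ k ∈ range n, u k) := hpartial n
    _ ≤ (a 0 + ∑' k, v k) * Real.exp (∑' k, u k) :=
      mul_le_mul (by gcongr; exact hv'.sum_le_tsum _ fun k _ => hv k)
        (Real.exp_le_exp.2 (hu'.sum_le_tsum _ fun k _ => hu k)) (Real.exp_pos _).le
        (add_nonneg ha₀ (tsum_nonneg hv))

theorem summable_and_tendsto_of_succ_le_sub_add {b c e : ℕ → ℝ} (hb : ∀ n, 0 ≤ b n)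
    (hc : ∀ n, 0 ≤ c n) (he : ∀ n, 0 ≤ e n) (he' : Summable e)
    (h : ∀ n, b (n + 1) ≤ b n - c n + e n) :
    Summable c ∧ ∃ L, Tendsto b atTop (nhds L) := by
  set s : ℕ → ℝ := fun n => b n + ∑ k ∈ range n, c k - ∑ k ∈ range n, e k
  have hanti : Antitone s := antitone_nat_of_succ_le fun n => by
    simp only [s, sum_range_succ]; linarith [h n]
  have hpartial : ∀ n, ∑ k ∈ range n, e k ≤ ∑' k, e k := fun n =>
    he'.sum_le_tsum _ fun k _ => he k
  have hc' : Summable c := by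
    refine summable_of_sum_range_le hc (c := b 0 + ∑' k, e k) fun n => ?_
    have := hanti (Nat.zero_le n)
    simp only [s, range_zero, sum_empty] at this
    linarith [hb n, hpartial n]
  have hbdd : BddBelow (Set.range s) := ⟨-∑' k, e k, by
    rintro _ ⟨n, rfl⟩
    linarith [hb n, sum_nonneg fun k (_ : k ∈ range n) => hc k, hpartial n]⟩
  refine ⟨hc', _, ((tendsto_atTop_ciInf hanti hbdd).sub
    hc'.hasSum.tendsto_sum_nat).add he'.hasSum.tendsto_sum_nat |>.congr fun n => ?_⟩
  simp only [s]; ring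

theorem frequently_lt_of_summable_mul {γ δ : ℕ → ℝ} (hγ : ∀ n, 0 ≤ γ n) (hγ' : ¬Summable γ)
    (h : Summable fun n => γ n * δ n) {η : ℝ} (hη : 0 < η) : ∃ᶠ n in atTop, δ n < η := by
  refine fun hev => hγ' ((h.mul_left η⁻¹).of_norm_bounded_eventually ?_)
  rw [Nat.cofinite_eq_atTop]
  filter_upwards [hev] with n hn
  rw [Real.norm_of_nonneg (hγ n), le_inv_mul_iff₀ hη, mul_comm]
  exact mul_le_mul_of_nonneg_left (not_lt.1 hn) (hγ n)

theorem exists_pos_forall_infDist_lt {X : Type*} [PseudoMetricSpace X] {f : X → ℝ}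
    (hf : Continuous f) {m c : ℝ} (hmc : m < c) (hK : IsCompact {z | f z ≤ c})
    {ε : ℝ} (hε : 0 < ε) : ∃ η > 0, ∀ z, f z < m + η → infDist z {z | f z ≤ m} < ε := by
  set K := {z | f z ≤ c} ∩ {z | ε ≤ infDist z {z | f z ≤ m}}
  have hKc : IsCompact K :=
    hK.inter_right (isClosed_le continuous_const (continuous_infDist_pt _))
  have hfK : ∀ z ∈ K, m < f z := fun z hz => not_le.1 fun hzm => by
    have hzS : infDist z {z | f z ≤ m} = 0 := infDist_zero_of_mem hzm
    exact (hz.2 : ε ≤ _).not_gt (hzS ▸ hε)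
  obtain ⟨a, hma, ha⟩ := hKc.exists_forall_le' hf.continuousOn hfK
  refine ⟨min (c - m) (a - m), lt_min (sub_pos.2 hmc) (sub_pos.2 hma), fun z hz => ?_⟩
  by_contra hzε
  have hzK : z ∈ K := ⟨show f z ≤ c by linarith [min_le_left (c - m) (a - m)], not_lt.1 hzε⟩
  linarith [ha z hzK, min_le_right (c - m) (a - m)]

section Subgradient

variable {H : Type*} [NormedAddCommGroup H] [InnerProductSpace ℝ H]

def HasSubgradientAt (f : H → ℝ) (g x : H) : Prop :=
  ∀ y, f x + ⟪g, y - x⟫ ≤ f y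

theorem HasSubgradientAt.norm_sub_step_sq_le {f : H → ℝ} {g x : H} (h : HasSubgradientAt f g x)
    {γ : ℝ} (hγ : 0 ≤ γ) (z : H) :
    ‖x - γ • g - z‖ ^ 2 ≤ ‖x - z‖ ^ 2 - 2 * γ * (f x - f z) + γ ^ 2 * ‖g‖ ^ 2 := by
  have hgap : f x - f z ≤ ⟪x - z, g⟫ := by
    have := h z
    rw [← neg_sub x z, inner_neg_right, real_inner_comm] at this
    linarith
  have hexpand : ‖x - γ • g - z‖ ^ 2 = ‖x - z‖ ^ 2 - 2 * γ * ⟪x - z, g⟫ + γ ^ 2 * ‖g‖ ^ 2 := by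
    rw [sub_right_comm, norm_sub_sq_real, inner_smul_right, norm_smul, Real.norm_of_nonneg hγ]
    ring
  rw [hexpand]
  nlinarith

theorem HasSubgradientAt.infDist_step_sq_le [ProperSpace H] {f : H → ℝ} {g x : H}
    (h : HasSubgradientAt f g x) {γ : ℝ} (hγ : 0 ≤ γ) {S : Set H} (hS : IsClosed S)
    (hS' : S.Nonempty) {m : ℝ} (hfS : ∀ z ∈ S, f z ≤ m) :
    infDist (x - γ • g) S ^ 2 ≤ infDist x S ^ 2 - 2 * γ * (f x - m) + γ ^ 2 * ‖g‖ ^ 2 := by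
  obtain ⟨z, hz, hxz⟩ := hS.exists_infDist_eq_dist hS' x
  calc infDist (x - γ • g) S ^ 2 ≤ ‖x - γ • g - z‖ ^ 2 := by
        gcongr
        · exact infDist_nonneg
        · exact dist_eq_norm (x - γ • g) z ▸ infDist_le_dist_of_mem hz
    _ ≤ ‖x - z‖ ^ 2 - 2 * γ * (f x - f z) + γ ^ 2 * ‖g‖ ^ 2 := h.norm_sub_step_sq_le hγ z
    _ ≤ infDist x S ^ 2 - 2 * γ * (f x - m) + γ ^ 2 * ‖g‖ ^ 2 := by
        rw [hxz, dist_eq_norm]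
        nlinarith [hfS z hz]

theorem sq_norm_le_of_le_mul_one_add_norm {E : Type*} [SeminormedAddCommGroup E] {C : ℝ}
    {g x : E} (h : ‖g‖ ≤ C * (1 + ‖x‖)) (z : E) :
    ‖g‖ ^ 2 ≤ 2 * C ^ 2 * (1 + ‖z‖) ^ 2 + 2 * C ^ 2 * ‖x - z‖ ^ 2 := by
  have hx : ‖x‖ ≤ ‖z‖ + ‖x - z‖ := by simpa using norm_add_le z (x - z)
  calc ‖g‖ ^ 2 ≤ C ^ 2 * (1 + ‖x‖) ^ 2 := by rw [← mul_pow]; gcongr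
    _ ≤ C ^ 2 * (2 * (1 + ‖z‖) ^ 2 + 2 * ‖x - z‖ ^ 2) := by
        gcongr
        nlinarith [sq_nonneg (1 + ‖z‖ - ‖x - z‖), norm_nonneg x]
    _ = _ := by ring

theorem exists_sq_norm_subgradient_le {f : H → ℝ} {x₀ : H} (hx₀ : ∀ y, f x₀ ≤ f y) {C : ℝ}
    {γ : ℕ → ℝ} (hγ : ∀ n, 0 ≤ γ n) (hγ2 : Summable fun n => γ n ^ 2) {x g : ℕ → H}
    (hg : ∀ n, HasSubgradientAt f (g n) (x n)) (hx : ∀ n, x (n + 1) = x n - γ n • g n)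
    (hgrow : ∀ n, ‖g n‖ ≤ C * (1 + ‖x n‖)) : ∃ G, ∀ n, ‖g n‖ ^ 2 ≤ G := by
  set D := 2 * C ^ 2 * (1 + ‖x₀‖) ^ 2
  have hg2 : ∀ n, ‖g n‖ ^ 2 ≤ D + 2 * C ^ 2 * ‖x n - x₀‖ ^ 2 := fun n =>
    sq_norm_le_of_le_mul_one_add_norm (hgrow n) x₀
  have hrec : ∀ n, ‖x (n + 1) - x₀‖ ^ 2 ≤
      (1 + 2 * C ^ 2 * γ n ^ 2) * ‖x n - x₀‖ ^ 2 + D * γ n ^ 2 := fun n => by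
    have := (hg n).norm_sub_step_sq_le (hγ n) x₀
    rw [← hx n] at this
    nlinarith [hg2 n, mul_nonneg (hγ n) (sub_nonneg.2 (hx₀ (x n))), sq_nonneg (γ n)]
  have hbound := le_mul_exp_tsum_of_succ_le (a := fun n => ‖x n - x₀‖ ^ 2)
    (fun n => by positivity) (fun n => by positivity) (hγ2.mul_left (2 * C ^ 2))
    (hγ2.mul_left D) (sq_nonneg _) hrec
  exact ⟨_, fun n => (hg2 n).trans
    (add_le_add le_rfl (mul_le_mul_of_nonneg_left (hbound n) (by positivity)))⟩

end Subgradient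

theorem subgradient_descent_converges_general
    {H : Type*} [NormedAddCommGroup H] [InnerProductSpace ℝ H]
    [FiniteDimensional ℝ H]
    (f : H → ℝ) (hcont : Continuous f)
    (hlevel : ∀ y : ℝ, Bornology.IsBounded {x : H | f x ≤ y})
    (C : ℝ)
    (hgrow : ∀ (x g : H), (∀ y : H, f x + ⟪g, y - x⟫ ≤ f y) →
      ‖g‖ ≤ C * (1 + ‖x‖))
    (γ : ℕ → ℝ) (hγpos : ∀ n, 0 < γ n)
    (hγ1 : Tendsto (fun N => ∑ n ∈ Finset.range N, γ n) atTop atTop)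
    (hγ2 : Summable fun n => (γ n) ^ 2)
    (x g : ℕ → H)
    (hg : ∀ n, ∀ y : H, f (x n) + ⟪g n, y - x n⟫ ≤ f y)
    (hx : ∀ n, x (n + 1) = x n - γ n • g n) :
    Tendsto (fun n => Metric.infDist (x n) {z : H | ∀ y : H, f z ≤ f y})
      atTop (nhds 0) := by
  have hγ : ∀ n, 0 ≤ γ n := fun n => (hγpos n).le
  have hsub : ∀ n, HasSubgradientAt f (g n) (x n) := hg
  obtain ⟨x₀, hx₀⟩ := hcont.exists_forall_le_of_isBounded 0 (hlevel (f 0))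
  set S := {z : H | f z ≤ f x₀}
  have hS : {z : H | ∀ y, f z ≤ f y} = S :=
    Set.ext fun z => ⟨fun hz => hz x₀, fun hz y => hz.trans (hx₀ y)⟩
  rw [hS]
  set d := fun n => infDist (x n) S
  obtain ⟨G, hG⟩ := exists_sq_norm_subgradient_le hx₀ hγ hγ2 hsub hx fun n => hgrow _ _ (hg n)
  have hstep : ∀ n, d (n + 1) ^ 2 ≤ d n ^ 2 - γ n * (2 * (f (x n) - f x₀)) + γ n ^ 2 * G := by
    intro n
    have := (hsub n).infDist_step_sq_le (hγ n) (isClosed_le hcont continuous_const)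
      ⟨x₀, show f x₀ ≤ f x₀ from le_rfl⟩ fun z hz => hz
    rw [← hx n] at this
    nlinarith [hG n, sq_nonneg (γ n)]
  obtain ⟨hsum, L, hL⟩ := summable_and_tendsto_of_succ_le_sub_add (fun n => sq_nonneg (d n))
    (fun n => mul_nonneg (hγ n) (by linarith [hx₀ (x n)]))
    (fun n => mul_nonneg (sq_nonneg _) ((sq_nonneg _).trans (hG n))) (hγ2.mul_right G) hstep
  have hγ' : ¬Summable γ := fun h => not_tendsto_atTop_of_tendsto_nhds h.hasSum.tendsto_sum_nat hγ1
  have hfreq : ∀ ε > 0, ∃ᶠ n in atTop, d n ≤ ε := fun ε hε => by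
    obtain ⟨η, hη, hηS⟩ := exists_pos_forall_infDist_lt hcont (lt_add_one (f x₀))
      (isCompact_of_isClosed_isBounded (isClosed_le hcont continuous_const) (hlevel _)) hε
    exact (frequently_lt_of_summable_mul hγ hγ' hsum (by linarith : 0 < 2 * η)).mono
      fun n hn => (hηS _ (by linarith [hx₀ (x n)])).le
  have hd : Tendsto d atTop (nhds √L) := hL.sqrt.congr fun n => Real.sqrt_sq infDist_nonneg
  have hL0 : √L = 0 := le_antisymm (le_of_forall_pos_le_add fun ε hε => by
    simpa using le_of_tendsto_of_frequently hd (hfreq ε hε)) (Real.sqrt_nonneg L)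
  rwa [hL0] at hd

/-- Convergence of the subgradient descent method: for `f` convex continuous
with bounded lower level sets and linearly bounded subgradients, with step
sizes `γ_n > 0`, `∑γ_n = ∞`, `∑γ_n² < ∞`, the iterates `x_{n+1} = x_n - γ_n g_n`
(with `g_n ∈ ∂f(x_n)`) converge to the set of minimizers of `f`. -/
theorem subgradient_descent_converges
    {H : Type*} [NormedAddCommGroup H] [InnerProductSpace ℝ H]
    [FiniteDimensional ℝ H]
    (f : H → ℝ) (hconv : ConvexOn ℝ Set.univ f) (hcont : Continuous f)
    (hlevel : ∀ y : ℝ, Bornology.IsBounded {x : H | f x ≤ y})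
    (C : ℝ) (hC : 0 < C)
    (hgrow : ∀ (x g : H), (∀ y : H, f x + ⟪g, y - x⟫ ≤ f y) →
      ‖g‖ ≤ C * (1 + ‖x‖))
    (γ : ℕ → ℝ) (hγpos : ∀ n, 0 < γ n)
    (hγ1 : Tendsto (fun N => ∑ n ∈ Finset.range N, γ n) atTop atTop)
    (hγ2 : Summable fun n => (γ n) ^ 2)
    (x g : ℕ → H)
    (hg : ∀ n, ∀ y : H, f (x n) + ⟪g n, y - x n⟫ ≤ f y)
    (hx : ∀ n, x (n + 1) = x n - γ n • g n) :
    Tendsto (fun n => Metric.infDist (x n) {z : H | ∀ y : H, f z ≤ f y})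
      atTop (nhds 0) :=
  subgradient_descent_converges_general f hcont hlevel C hgrow γ hγpos hγ1 hγ2 x g hg hx
end

section
/- Let W be a real square matrix in block form W = [[W^R, W^S],[0, I]] indexed by a partition of vertices into regular set R and stubborn set S, where W is right stochastic (nonnegative entries, rows summing to 1), and suppose in the directed graph with edge (v,w) whenever W(v,w) > 0, every node of R has a directed path to some node of S. Then the spectral radius of W^R is strictly less than 1; equivalently zI − W^R is invertible for every complex z with |z| ≥ 1. -/
/-!
Suppose `zI - W^R` is singular with `‖z‖ ≥ 1`, and let `v ≠ 0` be a kernel vector, extended by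
zero to the stubborn nodes. At a node where `‖v‖` is maximal, the eigen-equation
`z v = W^R v` makes `‖v‖` a weighted average, with total weight at most one, of values that are
no larger; so the maximum is attained at every successor in the positivity graph. Following a
path to a stubborn node then forces the maximum to be `0`, a contradiction.
-/

open Finset Matrix

theorem Relation.ReflTransGen.of_forall_imp {α : Type*} {r : α → α → Prop} {P : α → Prop}
    (hP : ∀ a b, r a b → P a → P b) {a b : α} (hab : Relation.ReflTransGen r a b) (ha : P a) :
    P b := by
  induction hab with
  | refl => exact ha
  | tail _ hbc ih => exact hP _ _ hbc ih

theorem norm_eq_of_le_norm_sum_mul {ι : Type*} [Fintype ι] {w : ι → ℝ} (hw : ∀ j, 0 ≤ w j)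
    (hsum : ∑ j, w j ≤ 1) {u : ι → ℂ} {m : ℝ} (hu : ∀ j, ‖u j‖ ≤ m)
    (hm : m ≤ ‖∑ j, (w j : ℂ) * u j‖) {j : ι} (hj : 0 < w j) : ‖u j‖ = m := by
  have hm0 : 0 ≤ m := (norm_nonneg _).trans (hu j)
  have htriangle : ‖∑ j, (w j : ℂ) * u j‖ ≤ ∑ j, w j * ‖u j‖ :=
    (norm_sum_le _ _).trans_eq <| sum_congr rfl fun j _ => by
      rw [norm_mul, Complex.norm_real, Real.norm_of_nonneg (hw j)]
  have hdefect : ∑ j, w j * (m - ‖u j‖) ≤ 0 := by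
    simp only [mul_sub, sum_sub_distrib, ← sum_mul]
    nlinarith
  have hterm_nonneg (k : ι) : 0 ≤ w k * (m - ‖u k‖) := mul_nonneg (hw k) (sub_nonneg.2 (hu k))
  have hterm := (sum_eq_zero_iff_of_nonneg fun k _ => hterm_nonneg k).1
    (hdefect.antisymm (sum_nonneg fun k _ => hterm_nonneg k)) j (mem_univ j)
  linarith [(mul_eq_zero.1 hterm).resolve_left hj.ne']

theorem Matrix.exists_mulVec_eq_smul_of_not_isUnit_sub {n : Type*} [Fintype n] [DecidableEq n]
    {K : Type*} [Field K] {A : Matrix n n K} {z : K} (h : ¬IsUnit (z • (1 : Matrix n n K) - A)) :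
    ∃ v ≠ 0, A *ᵥ v = z • v := by
  rw [isUnit_iff_isUnit_det, isUnit_iff_ne_zero, not_not, ← exists_mulVec_eq_zero_iff] at h
  obtain ⟨v, hv, hMv⟩ := h
  refine ⟨v, hv, ?_⟩
  rw [sub_mulVec, smul_mulVec, one_mulVec, sub_eq_zero] at hMv
  exact hMv.symm

theorem stubborn_gossip_spectral_radius_general
    {R S : Type*} [Fintype R] [Fintype S] [DecidableEq R]
    (W : Matrix (R ⊕ S) (R ⊕ S) ℝ)
    (hnn : ∀ i j, 0 ≤ W i j)
    (hrow : ∀ i, ∑ j, W i j = 1)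
    (hpath : ∀ r : R, ∃ s : S,
      Relation.ReflTransGen (fun i j => 0 < W i j) (Sum.inl r) (Sum.inr s)) :
    ∀ z : ℂ, 1 ≤ ‖z‖ →
      IsUnit (z • (1 : Matrix R R ℂ)
        - (W.submatrix Sum.inl Sum.inl).map (fun a => (a : ℂ))) := by
  intro z hz
  by_contra hsing
  obtain ⟨v, hv, heig⟩ := exists_mulVec_eq_smul_of_not_isUnit_sub hsing
  set u : R ⊕ S → ℂ := Sum.elim v 0
  have heig_u (r : R) : z * v r = ∑ j, (W (Sum.inl r) j : ℂ) * u j := by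
    simpa [u, mulVec, dotProduct, Fintype.sum_sum_type] using (congrFun heig r).symm
  obtain ⟨r₁, hr₁⟩ := Function.ne_iff.1 hv
  obtain ⟨r₀, -, hmax⟩ := exists_max_image univ (‖v ·‖) ⟨r₁, mem_univ r₁⟩
  have hpos : 0 < ‖v r₀‖ := (norm_pos_iff.2 hr₁).trans_le (hmax r₁ (mem_univ r₁))
  have hclosed : ∀ x y, 0 < W x y → ‖u x‖ = ‖v r₀‖ → ‖u y‖ = ‖v r₀‖ := by
    rintro (r | s) y hxy hx
    · change ‖v r‖ = _ at hx
      refine norm_eq_of_le_norm_sum_mul (hnn _) (hrow _).le ?_ ?_ hxy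
      · rintro (r' | s')
        exacts [hmax r' (mem_univ r'), by simp [u, hpos.le]]
      · rw [← heig_u, norm_mul, hx]
        exact le_mul_of_one_le_left hpos.le hz
    · simp [u, hpos.ne] at hx
  obtain ⟨s, hs⟩ := hpath r₀
  simpa [u, hpos.ne] using hs.of_forall_imp hclosed rfl

/-- Linear gossip with stubborn agents: if `W = [[W^R, W^S],[0, I]]` is right
stochastic and every regular node has a directed path (in the positivity graph
of `W`) to some stubborn node, then `zI - W^R` is invertible for every complex
`z` with `|z| ≥ 1` (equivalently, the spectral radius of `W^R` is `< 1`). -/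
theorem stubborn_gossip_spectral_radius
    {R S : Type*} [Fintype R] [Fintype S] [DecidableEq R] [DecidableEq S]
    (W : Matrix (R ⊕ S) (R ⊕ S) ℝ)
    (hnn : ∀ i j, 0 ≤ W i j) (hle : ∀ i j, W i j ≤ 1)
    (hrow : ∀ i, ∑ j, W i j = 1)
    (hblock0 : ∀ (s : S) (r : R), W (Sum.inr s) (Sum.inl r) = 0)
    (hblockI : ∀ s s' : S, W (Sum.inr s) (Sum.inr s') = if s = s' then 1 else 0)
    (hpath : ∀ r : R, ∃ s : S,
      Relation.ReflTransGen (fun i j => 0 < W i j) (Sum.inl r) (Sum.inr s)) :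
    ∀ z : ℂ, 1 ≤ ‖z‖ →
      IsUnit (z • (1 : Matrix R R ℂ)
        - (W.submatrix Sum.inl Sum.inl).map (fun a => (a : ℂ))) :=
  stubborn_gossip_spectral_radius_general W hnn hrow hpath
end

section
/- Under the assumptions of the previous block structure (W = [[W^R, W^S],[0, I]] right stochastic, every regular node has a directed path in the positivity graph of W to a stubborn node), the iteration x_{n+1} = W x_n with fixed stubborn block x^S converges, for any initial regular block x₀^R, to the limit whose regular block is (I − W^R)^{-1} W^S x^S; in particular the limit is independent of x₀^R. -/
open Finset Filter

noncomputable section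

/-!
The stubborn block of `x n` never moves, so the regular block follows the affine recurrence
`y (n + 1) = W^R y n + W^S x^S`. The matrix `W^R` is nonnegative with row sums at most `1`, and
along a positive path towards a stubborn node mass leaks out of every regular row, so some power
of `W^R` has all row sums `< 1`, i.e. `∞`-operator norm `< 1`. Hence `(W^R)^n → 0`, which makes
`1 - W^R` invertible and gives `y n - z = (W^R)^n (y 0 - z) → 0` for the fixed point
`z = (1 - W^R)⁻¹ W^S x^S`.
-/

open Topology

theorem tendsto_pow_atTop_nhds_zero_of_norm_pow_lt_one {R : Type*} [SeminormedRing R] {x : R}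
    {K : ℕ} (hK : 0 < K) (h : ‖x ^ K‖ < 1) : Tendsto (x ^ ·) atTop (𝓝 0) := by
  have hq : Tendsto (fun n => (x ^ K) ^ (n / K)) atTop (𝓝 0) :=
    (tendsto_pow_atTop_nhds_zero_of_norm_lt_one h).comp (Nat.tendsto_div_const_atTop hK.ne')
  have hr : IsBoundedUnder (· ≤ ·) atTop ((‖·‖) ∘ fun n => x ^ (n % K)) :=
    isBoundedUnder_of ⟨∑ m ∈ range K, ‖x ^ m‖, fun n =>
      single_le_sum (fun m _ => norm_nonneg (x ^ m)) (mem_range.mpr (Nat.mod_lt n hK))⟩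
  simpa only [← pow_mul, ← pow_add, Nat.div_add_mod] using hq.zero_mul_isBoundedUnder_le hr

theorem Relation.ReflTransGen.exists_inl_inr_step {α β : Type*} {r : α ⊕ β → α ⊕ β → Prop}
    {a : α} {b : β} (h : ReflTransGen r (.inl a) (.inr b)) :
    ∃ a' b', ReflTransGen (fun x y => r (.inl x) (.inl y)) a a' ∧ r (.inl a') (.inr b') := by
  suffices ∀ c, ReflTransGen r c (.inr b) → ∀ a, c = .inl a →
      ∃ a' b', ReflTransGen (fun x y => r (.inl x) (.inl y)) a a' ∧ r (.inl a') (.inr b') from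
    this _ h a rfl
  intro c hc
  induction hc using Relation.ReflTransGen.head_induction_on with
  | refl => intro a ha; cases ha
  | @head c d hcd _ ih =>
    rintro a rfl
    cases d with
    | inl a'' =>
      obtain ⟨a', b', hpath, hstep⟩ := ih a'' rfl
      exact ⟨a', b', .head hcd hpath, hstep⟩
    | inr b'' => exact ⟨a, b'', .refl, hcd⟩

namespace Matrix

section Topological

variable {ι 𝕜 : Type*} [Fintype ι] [DecidableEq ι] [TopologicalSpace 𝕜] {A : Matrix ι ι 𝕜}

theorem tendsto_pow_mulVec_nhds_zero [Semiring 𝕜] [IsTopologicalSemiring 𝕜]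
    (hA : Tendsto (A ^ ·) atTop (𝓝 0)) (v : ι → 𝕜) :
    Tendsto (fun n => A ^ n *ᵥ v) atTop (𝓝 0) := by
  simpa [Function.comp_def] using
    ((continuous_id.matrix_mulVec (continuous_const (y := v))).tendsto 0).comp hA

variable [Field 𝕜] [IsTopologicalRing 𝕜] [T2Space 𝕜]

theorem isUnit_det_one_sub_of_tendsto_pow (hA : Tendsto (A ^ ·) atTop (𝓝 0)) :
    IsUnit (1 - A).det := by
  rw [isUnit_iff_ne_zero]
  intro h
  obtain ⟨v, hv, hfix⟩ := exists_mulVec_eq_zero_iff.mpr h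
  have hpow : ∀ n, A ^ n *ᵥ v = v := by
    rw [sub_mulVec, one_mulVec, sub_eq_zero] at hfix
    intro n
    induction n with
    | zero => simp
    | succ n ih => rw [pow_succ, ← mulVec_mulVec, ← hfix, ih]
  refine hv (tendsto_nhds_unique ?_ (tendsto_pow_mulVec_nhds_zero hA v))
  simp only [hpow, tendsto_const_nhds]

theorem tendsto_of_affine_recurrence (hA : Tendsto (A ^ ·) atTop (𝓝 0)) {b : ι → 𝕜}
    {y : ℕ → ι → 𝕜} (hy : ∀ n, y (n + 1) = A *ᵥ y n + b) :
    Tendsto y atTop (𝓝 ((1 - A)⁻¹ *ᵥ b)) := by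
  set z := (1 - A)⁻¹ *ᵥ b
  have hz : A *ᵥ z + b = z := by
    have : (1 - A) *ᵥ z = b := by
      rw [mulVec_mulVec, mul_nonsing_inv _ (isUnit_det_one_sub_of_tendsto_pow hA), one_mulVec]
    rw [sub_mulVec, one_mulVec] at this
    rw [← this, add_sub_cancel]
  have hclosed : ∀ n, y n = z + A ^ n *ᵥ (y 0 - z) := by
    intro n
    induction n with
    | zero => simp
    | succ n ih =>
      rw [hy, ih, mulVec_add, pow_succ', ← mulVec_mulVec, add_right_comm, hz]
  rw [funext hclosed]
  simpa using (tendsto_pow_mulVec_nhds_zero hA (y 0 - z)).const_add z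

end Topological

section Substochastic

variable {ι : Type*} [Fintype ι] {A : Matrix ι ι ℝ}

theorem mulVec_le_one_of_le_one (hA : ∀ i j, 0 ≤ A i j) (hrow : ∀ i, ∑ j, A i j ≤ 1)
    {v : ι → ℝ} (hv : ∀ i, v i ≤ 1) (i : ι) : (A *ᵥ v) i ≤ 1 :=
  calc (A *ᵥ v) i = ∑ j, A i j * v j := rfl
    _ ≤ ∑ j, A i j := sum_le_sum fun j _ => mul_le_of_le_one_right (hA i j) (hv j)
    _ ≤ 1 := hrow i

section

attribute [local instance] Matrix.linftyOpNormedAddCommGroup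

theorem linfty_opNorm_lt_one_of_nonneg (hA : ∀ i j, 0 ≤ A i j) (h : ∀ i, ∑ j, A i j < 1) :
    ‖A‖ < 1 := by
  rw [linfty_opNorm_def, ← NNReal.coe_one, NNReal.coe_lt_coe, Finset.sup_lt_iff one_pos]
  intro i _
  rw [← NNReal.coe_lt_coe, NNReal.coe_sum]
  simpa [Real.norm_of_nonneg (hA i _)] using h i

end

variable [DecidableEq ι]

theorem pow_mulVec_one_le_one (hA : ∀ i j, 0 ≤ A i j) (hrow : ∀ i, ∑ j, A i j ≤ 1)
    (n : ℕ) (i : ι) : (A ^ n *ᵥ 1) i ≤ 1 := by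
  induction n generalizing i with
  | zero => simp
  | succ n ih => rw [pow_succ', ← mulVec_mulVec]; exact mulVec_le_one_of_le_one hA hrow ih i

theorem antitone_pow_mulVec_one (hA : ∀ i j, 0 ≤ A i j) (hrow : ∀ i, ∑ j, A i j ≤ 1)
    (i : ι) : Antitone fun n => (A ^ n *ᵥ 1) i := by
  refine antitone_nat_of_succ_le fun n => ?_
  rw [pow_succ, ← mulVec_mulVec]
  exact sum_le_sum fun j _ => mul_le_mul_of_nonneg_left
    (mulVec_le_one_of_le_one hA hrow (fun _ => le_rfl) j) (pow_apply_nonneg hA n i j)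

theorem exists_pow_mulVec_one_lt_one_of_reflTransGen (hA : ∀ i j, 0 ≤ A i j)
    (hrow : ∀ i, ∑ j, A i j ≤ 1) {i j : ι}
    (hij : Relation.ReflTransGen (fun i j => 0 < A i j) i j) (hj : ∑ k, A j k < 1) :
    ∃ n, (A ^ n *ᵥ 1) i < 1 := by
  induction hij using Relation.ReflTransGen.head_induction_on with
  | refl => exact ⟨1, by simpa [mulVec, dotProduct] using hj⟩
  | @head i i' hii' _ ih =>
    obtain ⟨n, hn⟩ := ih
    refine ⟨n + 1, ?_⟩
    rw [pow_succ', ← mulVec_mulVec]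
    calc (A *ᵥ (A ^ n *ᵥ 1)) i = ∑ k, A i k * (A ^ n *ᵥ 1) k := rfl
      _ < ∑ k, A i k := sum_lt_sum
          (fun k _ => mul_le_of_le_one_right (hA i k) (pow_mulVec_one_le_one hA hrow n k))
          ⟨i', mem_univ _, mul_lt_of_lt_one_right hii' hn⟩
      _ ≤ 1 := hrow i

theorem tendsto_pow_atTop_nhds_zero_of_forall_exists_pow_mulVec_one_lt_one
    (hA : ∀ i j, 0 ≤ A i j) (hrow : ∀ i, ∑ j, A i j ≤ 1)
    (hleak : ∀ i, ∃ n, (A ^ n *ᵥ 1) i < 1) : Tendsto (A ^ ·) atTop (𝓝 0) := by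
  let _ := Matrix.linftyOpNormedRing (n := ι) (α := ℝ)
  choose k hk using hleak
  set K := univ.sup k + 1
  have hK : ∀ i, (A ^ K *ᵥ 1) i < 1 := fun i =>
    (antitone_pow_mulVec_one hA hrow i ((le_sup (mem_univ i)).trans (Nat.le_succ _))).trans_lt
      (hk i)
  refine tendsto_pow_atTop_nhds_zero_of_norm_pow_lt_one (K := K) (Nat.succ_pos _) ?_
  exact linfty_opNorm_lt_one_of_nonneg (pow_apply_nonneg hA K)
    (by simpa [mulVec, dotProduct] using hK)

end Substochastic

section Stubborn

variable {R S : Type*} [Fintype R] [Fintype S] (W : Matrix (R ⊕ S) (R ⊕ S) ℝ)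

theorem mulVec_apply_inl (v : R ⊕ S → ℝ) (r : R) :
    (W *ᵥ v) (.inl r) = (W.submatrix .inl .inl *ᵥ (v ∘ .inl)) r
      + (W.submatrix .inl .inr *ᵥ (v ∘ .inr)) r := by
  simp [mulVec, dotProduct, Fintype.sum_sum_type]

theorem mulVec_apply_inr [DecidableEq S] (hblock0 : ∀ (s : S) (r : R), W (.inr s) (.inl r) = 0)
    (hblockI : ∀ s s' : S, W (.inr s) (.inr s') = if s = s' then 1 else 0)
    (v : R ⊕ S → ℝ) (s : S) : (W *ᵥ v) (.inr s) = v (.inr s) := by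
  simp [mulVec, dotProduct, Fintype.sum_sum_type, hblock0, hblockI]

theorem sum_submatrix_inl_le_one (hnn : ∀ i j, 0 ≤ W i j) (hrow : ∀ i, ∑ j, W i j = 1) (r : R) :
    ∑ t, W.submatrix .inl .inl r t ≤ 1 := by
  have := hrow (.inl r)
  rw [Fintype.sum_sum_type] at this
  simp only [submatrix_apply]
  linarith [sum_nonneg fun s (_ : s ∈ univ) => hnn (.inl r) (.inr s)]

theorem sum_submatrix_inl_lt_one (hnn : ∀ i j, 0 ≤ W i j) (hrow : ∀ i, ∑ j, W i j = 1)
    {r : R} {s : S} (hrs : 0 < W (.inl r) (.inr s)) : ∑ t, W.submatrix .inl .inl r t < 1 := by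
  have := hrow (.inl r)
  rw [Fintype.sum_sum_type] at this
  simp only [submatrix_apply]
  linarith [single_le_sum (fun s (_ : s ∈ univ) => hnn (.inl r) (.inr s)) (mem_univ s)]

end Stubborn

end Matrix

theorem stubborn_gossip_convergence_general
    {R S : Type*} [Fintype R] [Fintype S] [DecidableEq R] [DecidableEq S]
    (W : Matrix (R ⊕ S) (R ⊕ S) ℝ)
    (hnn : ∀ i j, 0 ≤ W i j)
    (hrow : ∀ i, ∑ j, W i j = 1)
    (hblock0 : ∀ (s : S) (r : R), W (Sum.inr s) (Sum.inl r) = 0)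
    (hblockI : ∀ s s' : S, W (Sum.inr s) (Sum.inr s') = if s = s' then 1 else 0)
    (hpath : ∀ r : R, ∃ s : S,
      Relation.ReflTransGen (fun i j => 0 < W i j) (Sum.inl r) (Sum.inr s))
    (x : ℕ → (R ⊕ S) → ℝ) (xS : S → ℝ)
    (hinit : ∀ s : S, x 0 (Sum.inr s) = xS s)
    (hiter : ∀ n, x (n + 1) = W.mulVec (x n)) :
    Tendsto (fun n => fun r : R => x n (Sum.inl r)) atTop
      (nhds (((1 - W.submatrix Sum.inl Sum.inl)⁻¹
        * W.submatrix Sum.inl Sum.inr).mulVec xS)) := by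
  set A := W.submatrix Sum.inl Sum.inl
  have hA : ∀ r t, 0 ≤ A r t := fun r t => hnn _ _
  have hleak : ∀ r, ∃ n, (A ^ n).mulVec 1 r < 1 := fun r => by
    obtain ⟨s, hrs⟩ := hpath r
    obtain ⟨r', s', hrr', hr's'⟩ := hrs.exists_inl_inr_step
    exact Matrix.exists_pow_mulVec_one_lt_one_of_reflTransGen hA
      (W.sum_submatrix_inl_le_one hnn hrow) hrr' (W.sum_submatrix_inl_lt_one hnn hrow hr's')
  have hstubborn : ∀ n, x n ∘ Sum.inr = xS := by
    intro n
    induction n with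
    | zero => exact funext hinit
    | succ n ih => rw [← ih, hiter]; exact funext (W.mulVec_apply_inr hblock0 hblockI (x n))
  rw [← Matrix.mulVec_mulVec]
  refine Matrix.tendsto_of_affine_recurrence
    (Matrix.tendsto_pow_atTop_nhds_zero_of_forall_exists_pow_mulVec_one_lt_one hA
      (W.sum_submatrix_inl_le_one hnn hrow) hleak) fun n => ?_
  funext r
  rw [hiter, W.mulVec_apply_inl, hstubborn]
  rfl

/-- Convergence of linear gossip with stubborn agents: under the block
structure `W = [[W^R, W^S],[0, I]]` (right stochastic, every regular node has a
directed path in the positivity graph to a stubborn node), the iteration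
`x_{n+1} = W x_n` with fixed stubborn block `x^S` has regular block converging
to `(I - W^R)⁻¹ W^S x^S`, independently of the initial regular block. -/
theorem stubborn_gossip_convergence
    {R S : Type*} [Fintype R] [Fintype S] [DecidableEq R] [DecidableEq S]
    (W : Matrix (R ⊕ S) (R ⊕ S) ℝ)
    (hnn : ∀ i j, 0 ≤ W i j) (hle : ∀ i j, W i j ≤ 1)
    (hrow : ∀ i, ∑ j, W i j = 1)
    (hblock0 : ∀ (s : S) (r : R), W (Sum.inr s) (Sum.inl r) = 0)
    (hblockI : ∀ s s' : S, W (Sum.inr s) (Sum.inr s') = if s = s' then 1 else 0)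
    (hpath : ∀ r : R, ∃ s : S,
      Relation.ReflTransGen (fun i j => 0 < W i j) (Sum.inl r) (Sum.inr s))
    (x : ℕ → (R ⊕ S) → ℝ) (xS : S → ℝ)
    (hinit : ∀ s : S, x 0 (Sum.inr s) = xS s)
    (hiter : ∀ n, x (n + 1) = W.mulVec (x n)) :
    Tendsto (fun n => fun r : R => x n (Sum.inl r)) atTop
      (nhds (((1 - W.submatrix Sum.inl Sum.inl)⁻¹
        * W.submatrix Sum.inl Sum.inr).mulVec xS)) :=
  stubborn_gossip_convergence_general W hnn hrow hblock0 hblockI hpath x xS hinit hiter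
end
end

section
/- Let G=(V,E) be a finite connected d-regular graph and consider the ADMM iterations for the average-consensus problem f_v(x) = (1/2)(x − x₀(v))², i.e. x_{n+1}(v) minimizes the augmented Lagrangian in x given (z_n, η_n), with the multiplier antisymmetry η_n(v,w) = −η_n(w,v) and the identity z_n(v,w) + z_n(w,v) = x_n(v) + x_n(w). Then the network average is preserved: x̄_n = x̄₀ for all n ≥ 0. -/
/-!
Summing the first-order condition of the `x`-update over all vertices, the multiplier terms
cancel by antisymmetry of `η`, and pairing `z n w v` with `z n v w` turns the `z`-terms into
`d • ∑ v, x n v`. On a `d`-regular graph this gives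
`(1 + ρ d) ∑ v, x (n + 1) v = ∑ v, x₀ v + ρ d ∑ v, x n v`, so the total (hence the average)
is preserved by induction, as `1 + ρ d ≠ 0`.
-/

open Finset

namespace SimpleGraph

variable {V M : Type*} [Fintype V] {G : SimpleGraph V} [DecidableRel G.Adj] [AddCommMonoid M]

theorem sum_ite_adj_const (v : V) (c : M) :
    (∑ w, if G.Adj v w then c else 0) = G.degree v • c := by
  rw [← sum_filter, sum_const, ← neighborFinset_eq_filter, card_neighborFinset_eq_degree]

theorem sum_sum_ite_adj_swap (f : V → V → M) :
    (∑ v, ∑ w, if G.Adj v w then f w v else 0) = ∑ v, ∑ w, if G.Adj v w then f v w else 0 := by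
  rw [sum_comm]
  simp_rw [G.adj_comm]

theorem sum_sum_ite_adj_add (f g : V → V → M) :
    (∑ v, ∑ w, if G.Adj v w then f v w + g v w else 0) =
      (∑ v, ∑ w, if G.Adj v w then f v w else 0) + ∑ v, ∑ w, if G.Adj v w then g v w else 0 := by
  simp_rw [← sum_add_distrib, ← ite_add_zero]

namespace IsRegularOfDegree

variable {d : ℕ}

theorem sum_sum_ite_adj_left (hG : G.IsRegularOfDegree d) (g : V → M) :
    (∑ v, ∑ w, if G.Adj v w then g v else 0) = d • ∑ v, g v := by
  simp_rw [sum_ite_adj_const, hG.degree_eq, smul_sum]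

theorem sum_sum_ite_adj_right (hG : G.IsRegularOfDegree d) (g : V → M) :
    (∑ v, ∑ w, if G.Adj v w then g w else 0) = d • ∑ v, g v := by
  rw [sum_sum_ite_adj_swap (fun v _ => g v), hG.sum_sum_ite_adj_left]

theorem sum_sum_ite_adj_of_add_swap {M : Type*} [AddCommGroup M] [IsAddTorsionFree M]
    (hG : G.IsRegularOfDegree d) (z : V → V → M) (g : V → M)
    (hz : ∀ v w, G.Adj v w → z v w + z w v = g v + g w) :
    (∑ v, ∑ w, if G.Adj v w then z w v else 0) = d • ∑ v, g v := by
  refine nsmul_right_injective two_ne_zero ?_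
  calc 2 • ∑ v, ∑ w, (if G.Adj v w then z w v else 0)
      = ∑ v, ∑ w, if G.Adj v w then z v w + z w v else 0 := by
        rw [two_nsmul, sum_sum_ite_adj_add]
        nth_rewrite 1 [sum_sum_ite_adj_swap]
        rfl
    _ = ∑ v, ∑ w, if G.Adj v w then g v + g w else 0 := by
        refine sum_congr rfl fun v _ => sum_congr rfl fun w _ => ?_
        split_ifs with hvw
        exacts [hz v w hvw, rfl]
    _ = 2 • d • ∑ v, g v := by
        rw [sum_sum_ite_adj_add, hG.sum_sum_ite_adj_left, hG.sum_sum_ite_adj_right, two_nsmul]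

end IsRegularOfDegree

theorem sum_sum_ite_adj_eq_zero_of_antisymm {M : Type*} [AddCommGroup M] [IsAddTorsionFree M]
    (η : V → V → M) (hη : ∀ v w, η v w = -η w v) :
    (∑ v, ∑ w, if G.Adj v w then η w v else 0) = 0 := by
  refine nsmul_right_injective (M := M) two_ne_zero ?_
  simp only [smul_zero, two_nsmul]
  nth_rewrite 1 [← sum_sum_ite_adj_swap]
  rw [← sum_sum_ite_adj_add]
  refine sum_eq_zero fun v _ => sum_eq_zero fun w _ => ?_
  rw [hη v w, neg_add_cancel, ite_self]

end SimpleGraph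

theorem SimpleGraph.IsRegularOfDegree.sum_admm_x_update {V : Type*} [Fintype V]
    {G : SimpleGraph V} [DecidableRel G.Adj] {d : ℕ} (hG : G.IsRegularOfDegree d) (ρ : ℝ)
    (x₀ x x' : V → ℝ) (z η : V → V → ℝ) (hanti : ∀ v w, η v w = -η w v)
    (hz : ∀ v w, G.Adj v w → z v w + z w v = x v + x w)
    (hfoc : ∀ v, x' v - x₀ v - (∑ w, if G.Adj v w then η w v else 0)
        + ρ * (∑ w, if G.Adj v w then x' v - z w v else 0) = 0) :
    (1 + ρ * d) * ∑ v, x' v = ∑ v, x₀ v + ρ * d * ∑ v, x v := by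
  have hsum := sum_eq_zero fun v (_ : v ∈ univ) => hfoc v
  simp_rw [← sum_filter, sum_sub_distrib, sum_filter] at hsum
  rw [sum_add_distrib, sum_sub_distrib, sum_sub_distrib, ← mul_sum,
    sum_sum_ite_adj_eq_zero_of_antisymm η hanti, sum_sub_distrib] at hsum
  rw [hG.sum_sum_ite_adj_left, hG.sum_sum_ite_adj_of_add_swap z x hz, nsmul_eq_mul,
    nsmul_eq_mul] at hsum
  linear_combination hsum

theorem admm_average_preserved_general {V : Type*} [Fintype V]
    (G : SimpleGraph V) [DecidableRel G.Adj]
    (d : ℕ) (hreg : ∀ v, G.degree v = d)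
    (ρ : ℝ) (hρ : 0 < ρ) (x₀ : V → ℝ)
    (x : ℕ → V → ℝ) (z η : ℕ → V → V → ℝ)
    (h0 : x 0 = x₀)
    (hanti : ∀ n v w, η n v w = -η n w v)
    (hz : ∀ n v w, G.Adj v w → z n v w + z n w v = x n v + x n w)
    (hfoc : ∀ n v,
      x (n + 1) v - x₀ v - (∑ w, if G.Adj v w then η n w v else 0)
        + ρ * (∑ w, if G.Adj v w then x (n + 1) v - z n w v else 0) = 0) :
    ∀ n, (∑ v, x n v) / (Fintype.card V : ℝ)
      = (∑ v, x₀ v) / (Fintype.card V : ℝ) := by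
  have hreg : G.IsRegularOfDegree d := hreg
  have hcoeff : (1 + ρ * d : ℝ) ≠ 0 := by positivity
  have htotal : ∀ n, ∑ v, x n v = ∑ v, x₀ v := by
    intro n
    induction n with
    | zero => rw [h0]
    | succ n ih =>
      have hstep := hreg.sum_admm_x_update ρ x₀ (x n) (x (n + 1)) (z n) (η n) (hanti n) (hz n)
        (hfoc n)
      rw [ih] at hstep
      exact mul_left_cancel₀ hcoeff (by linear_combination hstep)
  intro n
  rw [htotal n]

/-- Average preservation of the ADMM for average consensus on a `d`-regular
graph: given the multiplier antisymmetry `η_n(v,w) = -η_n(w,v)`, the identity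
`z_n(v,w) + z_n(w,v) = x_n(v) + x_n(w)` on edges, and the first-order condition
of the `x`-update, the network average is preserved: `x̄_n = x̄₀` for all `n`. -/
theorem admm_average_preserved {V : Type*} [Fintype V] [DecidableEq V]
    (G : SimpleGraph V) [DecidableRel G.Adj] (hG : G.Connected)
    (d : ℕ) (hreg : ∀ v, G.degree v = d)
    (ρ : ℝ) (hρ : 0 < ρ) (x₀ : V → ℝ)
    (x : ℕ → V → ℝ) (z η : ℕ → V → V → ℝ)
    (h0 : x 0 = x₀)
    (hanti : ∀ n v w, η n v w = -η n w v)
    (hz : ∀ n v w, G.Adj v w → z n v w + z n w v = x n v + x n w)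
    (hfoc : ∀ n v,
      x (n + 1) v - x₀ v - (∑ w, if G.Adj v w then η n w v else 0)
        + ρ * (∑ w, if G.Adj v w then x (n + 1) v - z n w v else 0) = 0) :
    ∀ n, (∑ v, x n v) / (Fintype.card V : ℝ)
      = (∑ v, x₀ v) / (Fintype.card V : ℝ) :=
  admm_average_preserved_general G d hreg ρ hρ x₀ x z η h0 hanti hz hfoc
end
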